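/- arXiv:1604.08236 — 9 statements merged into one kernel-verified Lean document; each statement's English description precedes it below -/
import Mathlib

section
/- Let j be an integer and ζ = exp(2πi·j/k). There exists r₀ > 0 such that for every real r with 0 < r < r₀, (2πi)⁻¹ times the contour integral of f(z) = (a^k − z^k)/(z·(z^k − 1)²) over the circle of radius r centered at ζ (traversed once counterclockwise) equals −a^k/k. In particular the residue of f at every k-th root of unity is real. -/
open Finset Metric


/-- Let `ζ = exp(2πi j/k)` be a `k`-th root of unity. For all sufficiently small
radii `r`, the residue of `f(z) = (a^k - z^k)/(z*(z^k-1)^2)` at `ζ`, computed as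
`(2πi)⁻¹` times the contour integral over the circle of radius `r` centered at `ζ`,
equals `-a^k/k`; in particular it is real. -/
theorem stmt_3 (k : ℕ) (hk : 2 ≤ k) (a : ℝ) (ha0 : 0 < a) (ha1 : a < 1)
    (f : ℂ → ℂ)
    (hf : ∀ z : ℂ, f z = ((a : ℂ) ^ k - z ^ k) / (z * (z ^ k - 1) ^ 2))
    (j : ℤ) (ζ : ℂ)
    (hζ : ζ = Complex.exp (2 * Real.pi * Complex.I * (j : ℂ) / (k : ℂ))) :
    ∃ r₀ > 0, ∀ r : ℝ, 0 < r → r < r₀ →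
      (2 * Real.pi * Complex.I)⁻¹ * (∮ z in C(ζ, r), f z) =
        -(a : ℂ) ^ k / (k : ℂ) := by
  have hk0 : (k : ℂ) ≠ 0 := Nat.cast_ne_zero.2 (by omega)
  have hζ0 : ζ ≠ 0 := by rw [hζ]; exact Complex.exp_ne_zero _
  have hζk : ζ ^ k = 1 := by
    rw [hζ, ← Complex.exp_nat_mul]
    have : (k : ℂ) * (2 * Real.pi * Complex.I * (j : ℂ) / (k : ℂ)) =
        (j : ℂ) * (2 * Real.pi * Complex.I) := by field_simp
    rw [this, Complex.exp_int_mul_two_pi_mul_I]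
  -- the cofactor polynomial
  set q : ℂ → ℂ := fun z => ∑ i ∈ range k, z ^ i * ζ ^ (k - 1 - i) with hqdef
  have hfac : ∀ z : ℂ, q z * (z - ζ) = z ^ k - 1 := by
    intro z
    have := geom_sum₂_mul z ζ k
    rw [hζk] at this
    exact this
  have hqdiff : Differentiable ℂ q := by
    apply Differentiable.fun_sum
    intro i _
    exact (differentiable_pow i).mul_const _
  set u : ℂ := ζ ^ (k - 1) with hu
  set v : ℂ := ζ ^ (k - 2) with hv
  have huζ : u * ζ = 1 := by
    rw [hu, ← pow_succ, show k - 1 + 1 = k by omega, hζk]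
  have hvζ : v * ζ = u := by
    rw [hv, hu, ← pow_succ]
    congr 1; omega
  have hqζ : q ζ = (k : ℂ) * u := by
    rw [hqdef]
    simp only
    rw [show ∑ i ∈ range k, ζ ^ i * ζ ^ (k - 1 - i) = ∑ _i ∈ range k, ζ ^ (k-1) from
      Finset.sum_congr rfl fun i hi => by
        rw [← pow_add]; congr 1; have := Finset.mem_range.1 hi; omega]
    simp [hu, mul_comm]
  have hu0 : u ≠ 0 := pow_ne_zero _ hζ0
  have hqζ0 : q ζ ≠ 0 := by rw [hqζ]; exact mul_ne_zero hk0 hu0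
  -- derivative of q at ζ
  set S : ℂ := ∑ i ∈ range k, (i : ℂ) with hS
  have hS2 : S * 2 = (k : ℂ) * ((k : ℂ) - 1) := by
    rw [hS]
    have h2 := congrArg (Nat.cast : ℕ → ℂ) (Finset.sum_range_id_mul_two k)
    push_cast [Nat.cast_sub (by omega : 1 ≤ k)] at h2
    linear_combination h2
  have hq' : HasDerivAt q (S * v) ζ := by
    have h1 : HasDerivAt q (∑ i ∈ range k, (i : ℂ) * ζ ^ (i - 1) * ζ ^ (k - 1 - i)) ζ := by
      apply HasDerivAt.fun_sum
      intro i _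
      exact (hasDerivAt_pow i ζ).mul_const _
    have h2 : (∑ i ∈ range k, (i : ℂ) * ζ ^ (i - 1) * ζ ^ (k - 1 - i)) = S * v := by
      rw [hS, Finset.sum_mul]
      apply Finset.sum_congr rfl
      intro i hi
      rcases Nat.eq_zero_or_pos i with h0 | h0
      · simp [h0]
      · rw [mul_assoc, ← pow_add, hv]
        congr 2
        have := Finset.mem_range.1 hi; omega
    rwa [h2] at h1
  -- the regular part F
  set N : ℂ → ℂ := fun z => (a : ℂ) ^ k - z ^ k with hNdef
  set D : ℂ → ℂ := fun z => z * q z ^ 2 with hDdef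
  set F : ℂ → ℂ := fun z => N z / D z with hFdef
  have hDζ0 : D ζ ≠ 0 := mul_ne_zero hζ0 (pow_ne_zero _ hqζ0)
  have hN' : HasDerivAt N (0 - (k : ℂ) * ζ ^ (k - 1)) ζ :=
    (hasDerivAt_const ζ _).sub (hasDerivAt_pow k ζ)
  have hD' : HasDerivAt D (1 * q ζ ^ 2 + ζ * (2 * q ζ ^ 1 * (S * v))) ζ :=
    (hasDerivAt_id ζ).mul (hq'.pow 2)
  have hF' : HasDerivAt F
      (((0 - (k : ℂ) * ζ ^ (k - 1)) * D ζ - N ζ * (1 * q ζ ^ 2 + ζ * (2 * q ζ ^ 1 * (S * v)))) /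
        D ζ ^ 2) ζ := hN'.div hD' hDζ0
  -- value of the derivative
  have hval : deriv F ζ = -(a : ℂ) ^ k / (k : ℂ) := by
    rw [hF'.deriv]
    have hNζ : N ζ = (a : ℂ) ^ k - 1 := by rw [hNdef]; simp [hζk]
    have hDζ : D ζ = ζ * ((k : ℂ) * u) ^ 2 := by rw [hDdef]; simp [hqζ]
    have huinv : u = ζ⁻¹ := eq_inv_of_mul_eq_one_left huζ
    have hvinv : v = ζ⁻¹ * ζ⁻¹ := by
      rw [huinv] at hvζ
      field_simp at hvζ ⊢
      linear_combination hvζ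
    have hSval : S = ((k : ℂ) * ((k : ℂ) - 1)) / 2 := by
      field_simp
      linear_combination hS2
    rw [← hu, hNζ, hDζ, hqζ, huinv, hvinv, hSval]
    field_simp
    have h5 : ζ ^ 5 * ζ⁻¹ ^ 5 = 1 := by field_simp
    linear_combination (0 : ℂ) * h5
  -- choose r₀
  have hcont : Continuous fun z => z * q z := continuous_id.mul hqdiff.continuous
  have hUopen : IsOpen {z : ℂ | z * q z ≠ 0} :=
    isOpen_compl_singleton.preimage hcont
  have hζU : ζ ∈ {z : ℂ | z * q z ≠ 0} := mul_ne_zero hζ0 hqζ0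
  obtain ⟨ε, hε0, hball⟩ := Metric.isOpen_iff.1 hUopen ζ hζU
  refine ⟨ε, hε0, fun r hr0 hrε => ?_⟩
  have hsub : closedBall ζ r ⊆ {z : ℂ | z * q z ≠ 0} :=
    (Metric.closedBall_subset_ball hrε).trans hball
  -- F is differentiable on the closed ball
  have hFdiff : DifferentiableOn ℂ F (closedBall ζ r) := by
    intro z hz
    have hz' : z * q z ≠ 0 := hsub hz
    have hz0 : z ≠ 0 := fun h => hz' (by simp [h])
    have hqz0 : q z ≠ 0 := fun h => hz' (by simp [h])
    exact (((differentiable_const _).sub (differentiable_pow k)).differentiableAt.div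
      ((differentiableAt_id.mul ((hqdiff z).pow 2)))
      (mul_ne_zero hz0 (pow_ne_zero _ hqz0))).differentiableWithinAt
  -- power series
  set R : NNReal := ⟨r, hr0.le⟩ with hR
  have hRr : (R : ℝ) = r := rfl
  have hps : HasFPowerSeriesOnBall F (cauchyPowerSeries F ζ R) ζ R := by
    apply DifferentiableOn.hasFPowerSeriesOnBall
    · rwa [hRr]
    · exact hr0
  have hderiv : deriv F ζ = cauchyPowerSeries F ζ R 1 fun _ => 1 :=
    hps.hasFPowerSeriesAt.deriv
  have hcoeff := cauchyPowerSeries_apply F ζ R 1 1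
  -- identify integrands on the sphere
  have hEq : Set.EqOn f (fun z => ((1 : ℂ) / (z - ζ)) ^ 1 • ((z - ζ)⁻¹ • F z))
      (sphere ζ r) := by
    intro z hz
    have hzζ : z - ζ ≠ 0 := by
      have : z ≠ ζ := by
        intro h
        rw [mem_sphere, h, dist_self] at hz
        exact hr0.ne' hz.symm
      exact sub_ne_zero.2 this
    have hz' : z * q z ≠ 0 := hsub (sphere_subset_closedBall hz)
    have hz0 : z ≠ 0 := fun h => hz' (by simp [h])
    have hqz0 : q z ≠ 0 := fun h => hz' (by simp [h])
    have hzk : z ^ k - 1 = q z * (z - ζ) := (hfac z).symm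
    rw [hf z, hzk]
    have h1 : ((1 : ℂ) / (z - ζ)) ^ 1 • ((z - ζ)⁻¹ • F z) = F z / (z - ζ) ^ 2 := by
      simp only [smul_eq_mul, pow_one, one_div, pow_two, div_eq_mul_inv, mul_inv]
      ring
    beta_reduce
    rw [h1]
    simp only [hFdef, hNdef, hDdef]
    rw [div_div]
    congr 1
    ring
  have hint : (∮ z in C(ζ, r), f z) =
      ∮ z in C(ζ, r), ((1 : ℂ) / (z - ζ)) ^ 1 • ((z - ζ)⁻¹ • F z) :=
    circleIntegral.integral_congr hr0.le hEq
  rw [hint]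
  have : (2 * ↑Real.pi * Complex.I)⁻¹ *
      (∮ z in C(ζ, r), ((1 : ℂ) / (z - ζ)) ^ 1 • ((z - ζ)⁻¹ • F z)) =
      cauchyPowerSeries F ζ R 1 fun _ => 1 := by
    rw [hcoeff]
    simp [hRr, smul_eq_mul]
  rw [this, ← hderiv, hval]
end

section
/- There exists r₀ > 0 such that for every real r with 0 < r < r₀, (2πi)⁻¹ times the contour integral of the function z ↦ (1/G(z))·f(z) over the circle of radius r centered at 1 (traversed once counterclockwise) equals (k+1)/(ρ·k²). -/
open Complex Metric Finset

/-- For all sufficiently small radii `r`, the residue of `(1/G)·dh` at `z = 1`,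
computed as `(2πi)⁻¹` times the contour integral over the circle of radius `r`
centered at `1`, equals `(k+1)/(ρ k²)`. Here `G(z) = ρ z (z^k - a^k)` and
`f(z) = (a^k - z^k)/(z (z^k - 1)^2)`. -/
theorem stmt_5 (k : ℕ) (hk : 2 ≤ k) (a ρ : ℝ) (ha0 : 0 < a) (ha1 : a < 1)
    (hρ : 0 < ρ)
    (G f : ℂ → ℂ)
    (hG : ∀ z : ℂ, G z = (ρ : ℂ) * z * (z ^ k - (a : ℂ) ^ k))
    (hf : ∀ z : ℂ, f z = ((a : ℂ) ^ k - z ^ k) / (z * (z ^ k - 1) ^ 2)) :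
    ∃ r₀ > 0, ∀ r : ℝ, 0 < r → r < r₀ →
      (2 * Real.pi * Complex.I)⁻¹ * (∮ z in C(1, r), (1 / G z) * f z) =
        ((k : ℂ) + 1) / ((ρ : ℂ) * (k : ℂ) ^ 2) := by
  have hkpos : 0 < k := lt_of_lt_of_le two_pos hk
  have hkC : (k : ℂ) ≠ 0 := Nat.cast_ne_zero.mpr hkpos.ne'
  have hρC : (ρ : ℂ) ≠ 0 := Complex.ofReal_ne_zero.mpr hρ.ne'
  -- geometric-sum factor
  set S : ℂ → ℂ := fun z => ∑ j ∈ Finset.range k, z ^ j with hS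
  have hSfact : ∀ z : ℂ, z ^ k - 1 = (z - 1) * S z := by
    intro z
    rw [hS, mul_comm, geom_sum_mul]
  have hS1 : S 1 = (k : ℂ) := by simp [hS]
  -- the analytic part
  set φ : ℂ → ℂ := fun z => -((ρ : ℂ) * z ^ 2 * (S z) ^ 2)⁻¹ with hφ
  have hScont : Continuous S := by
    apply continuous_finset_sum; intro i _; exact continuous_pow i
  set U : Set ℂ := {z | z ≠ 0 ∧ S z ≠ 0} with hU
  have hUopen : IsOpen U := by
    have h1 : IsOpen {z : ℂ | z ≠ 0} := isOpen_compl_singleton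
    have h2 : IsOpen {z : ℂ | S z ≠ 0} := isOpen_compl_singleton.preimage hScont
    exact h1.inter h2
  have h1U : (1 : ℂ) ∈ U := by
    refine ⟨one_ne_zero, ?_⟩
    rw [hS1]; exact hkC
  obtain ⟨δ, hδpos, hδ⟩ := (Metric.isOpen_iff.mp hUopen) 1 h1U
  -- derivative of S at 1
  set S' : ℂ := ∑ j ∈ Finset.range k, (j : ℂ) with hS'
  have hSder : HasDerivAt S S' 1 := by
    have : HasDerivAt S (∑ j ∈ Finset.range k, (j : ℂ) * (1 : ℂ) ^ (j - 1)) 1 :=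
      HasDerivAt.fun_sum fun j _ => hasDerivAt_pow j 1
    simpa [hS'] using this
  have hsum : S' * 2 = (k : ℂ) * ((k : ℂ) - 1) := by
    have h2 : ((∑ j ∈ Finset.range k, j) * 2 : ℕ) = (k * (k - 1) : ℕ) :=
      Finset.sum_range_id_mul_two k
    have hcast := congrArg (fun n : ℕ => (n : ℂ)) h2
    push_cast [Nat.cast_sub hkpos] at hcast
    rw [hS']
    linear_combination hcast
  have hS'val : S' = (k : ℂ) * ((k : ℂ) - 1) / 2 := by
    field_simp
    linear_combination hsum
  -- derivative of the denominator u z = ρ z² (S z)²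
  set u : ℂ → ℂ := fun z => (ρ : ℂ) * z ^ 2 * (S z) ^ 2 with hu
  have hu1 : u 1 = (ρ : ℂ) * (k : ℂ) ^ 2 := by simp [hu, hS1]
  have hu1ne : u 1 ≠ 0 := by
    rw [hu1]; exact mul_ne_zero hρC (pow_ne_zero 2 hkC)
  have huder : HasDerivAt u ((ρ : ℂ) * (2 * 1) * (S 1) ^ 2
      + (ρ : ℂ) * 1 ^ 2 * (2 * S 1 ^ 1 * S')) 1 := by
    have h1 : HasDerivAt (fun z : ℂ => (ρ : ℂ) * z ^ 2) ((ρ : ℂ) * (2 * 1)) 1 := by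
      simpa using ((hasDerivAt_pow 2 (1 : ℂ)).const_mul (ρ : ℂ))
    have h2 : HasDerivAt (fun z : ℂ => (S z) ^ 2) (2 * S 1 ^ 1 * S') 1 := by
      simpa using hSder.fun_pow 2
    simpa [hu] using h1.fun_mul h2
  have hφder : HasDerivAt φ
      (-(-((ρ : ℂ) * (2 * 1) * (S 1) ^ 2 + (ρ : ℂ) * 1 ^ 2 * (2 * S 1 ^ 1 * S')) / (u 1) ^ 2))
      1 := (huder.inv hu1ne).neg
  have hφval : deriv φ 1 = ((k : ℂ) + 1) / ((ρ : ℂ) * (k : ℂ) ^ 2) := by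
    have hd : deriv φ 1
        = -(-((ρ : ℂ) * (2 * 1) * (S 1) ^ 2 + (ρ : ℂ) * 1 ^ 2 * (2 * S 1 ^ 1 * S')) / (u 1) ^ 2) :=
      hφder.deriv
    rw [hd, hu1, hS1, hS'val]
    field_simp
    ring
  -- φ is differentiable on U
  have hφdiff : DifferentiableOn ℂ φ U := by
    intro z hz
    have hzne : z ≠ 0 := hz.1
    have hSz : S z ≠ 0 := hz.2
    have hSd : DifferentiableAt ℂ S z := by
      apply Differentiable.differentiableAt
      apply Differentiable.fun_sum; intro i _; exact differentiable_pow i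
    have : DifferentiableAt ℂ φ z := by
      apply DifferentiableAt.neg
      apply DifferentiableAt.inv
      · exact ((differentiableAt_const _).mul (differentiableAt_pow 2)).mul (hSd.pow 2)
      · exact mul_ne_zero (mul_ne_zero hρC (pow_ne_zero 2 hzne)) (pow_ne_zero 2 hSz)
    exact this.differentiableWithinAt
  refine ⟨min δ (1 - a), lt_min hδpos (by linarith), ?_⟩
  intro r hr hrlt
  have hrδ : r < δ := lt_of_lt_of_le hrlt (min_le_left _ _)
  have hra : r < 1 - a := lt_of_lt_of_le hrlt (min_le_right _ _)
  have hball : closedBall (1 : ℂ) r ⊆ U := fun z hz =>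
    hδ (lt_of_le_of_lt (mem_closedBall.mp hz) hrδ)
  -- Cauchy formula for the derivative
  have hC := two_pi_I_inv_smul_circleIntegral_sub_sq_inv_smul_of_differentiable
    hUopen hball hφdiff (mem_ball_self hr)
  -- integrand equality on the sphere
  have hEq : Set.EqOn (fun z => (1 / G z) * f z)
      (fun z => ((z - 1) ^ 2)⁻¹ • φ z) (sphere (1 : ℂ) r) := by
    intro z hz
    have hzU : z ∈ U := hball (sphere_subset_closedBall hz)
    have hz0 : z ≠ 0 := hzU.1
    have hSz : S z ≠ 0 := hzU.2
    have hnz : ‖z - 1‖ = r := mem_sphere_iff_norm.mp hz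
    have hz1 : z ≠ 1 := by
      intro h
      rw [h, sub_self, norm_zero] at hnz
      exact hr.ne hnz
    have hz1' : z - 1 ≠ 0 := sub_ne_zero.mpr hz1
    have habs : a < ‖z‖ := by
      have h2 : ‖(1 : ℂ)‖ - ‖z‖ ≤ ‖(1 : ℂ) - z‖ := norm_sub_norm_le 1 z
      rw [norm_sub_rev, hnz] at h2
      simp only [norm_one] at h2
      linarith
    have hza : z ^ k - (a : ℂ) ^ k ≠ 0 := by
      intro h
      have h1 : ‖z ^ k‖ = ‖(a : ℂ) ^ k‖ := by
        rw [sub_eq_zero] at h; rw [h]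
      rw [norm_pow, norm_pow, Complex.norm_real, Real.norm_eq_abs, abs_of_pos ha0] at h1
      have : a ^ k < ‖z‖ ^ k :=
        pow_lt_pow_left₀ habs ha0.le hkpos.ne'
      rw [h1] at this
      exact lt_irrefl _ this
    have hAne : (ρ : ℂ) * z * (z ^ k - (a : ℂ) ^ k) ≠ 0 :=
      mul_ne_zero (mul_ne_zero hρC hz0) hza
    have hCne : z * ((z - 1) * S z) ^ 2 ≠ 0 :=
      mul_ne_zero hz0 (pow_ne_zero 2 (mul_ne_zero hz1' hSz))
    have hXne : ((ρ : ℂ) * z ^ 2 * (S z) ^ 2) ≠ 0 :=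
      mul_ne_zero (mul_ne_zero hρC (pow_ne_zero 2 hz0)) (pow_ne_zero 2 hSz)
    have hDne : (z - 1) ^ 2 * ((ρ : ℂ) * z ^ 2 * (S z) ^ 2) ≠ 0 :=
      mul_ne_zero (pow_ne_zero 2 hz1') hXne
    simp only [smul_eq_mul]
    rw [hG z, hf z, hφ, hSfact z]
    have hL : 1 / ((ρ : ℂ) * z * (z ^ k - (a : ℂ) ^ k))
        * (((a : ℂ) ^ k - z ^ k) / (z * ((z - 1) * S z) ^ 2))
        = ((a : ℂ) ^ k - z ^ k)
          / (((ρ : ℂ) * z * (z ^ k - (a : ℂ) ^ k)) * (z * ((z - 1) * S z) ^ 2)) := by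
      rw [div_mul_div_comm, one_mul]
    have hR : ((z - 1) ^ 2)⁻¹ * -((ρ : ℂ) * z ^ 2 * (S z) ^ 2)⁻¹
        = (-1) / ((z - 1) ^ 2 * ((ρ : ℂ) * z ^ 2 * (S z) ^ 2)) := by
      rw [mul_neg, ← mul_inv, neg_div, one_div]
    rw [hL, hR, div_eq_div_iff (mul_ne_zero hAne hCne) hDne]
    ring
  rw [circleIntegral.integral_congr hr.le hEq]
  rw [show ((2 : ℂ) * Real.pi * Complex.I)⁻¹ * (∮ z in C(1, r), ((z - 1) ^ 2)⁻¹ • φ z)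
      = ((2 : ℂ) * Real.pi * Complex.I)⁻¹ • (∮ z in C(1, r), ((z - 1) ^ 2)⁻¹ • φ z) from
      (smul_eq_mul _ _).symm]
  rw [hC, hφval]
end

section
/- There exists r₀ > 0 such that for every real r with 0 < r < r₀, (2πi)⁻¹ times the contour integral of the function z ↦ G(z)·f(z) over the circle of radius r centered at 1 (traversed once counterclockwise) equals ρ·(a^k − 1)·(k·a^k + k − a^k + 1)/k². -/
open Metric Set Complex

lemma my_integral_add {f g : ℂ → ℂ} {c : ℂ} {R : ℝ} (hf : CircleIntegrable f c R)
    (hg : CircleIntegrable g c R) :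
    (∮ z in C(c, R), (f z + g z)) = (∮ z in C(c, R), f z) + ∮ z in C(c, R), g z := by
  simp only [circleIntegral, smul_add, intervalIntegral.integral_add hf.out hg.out]

lemma my_hasDerivAt_phi (k : ℕ) (hk : 2 ≤ k) (A C : ℂ) :
    HasDerivAt (fun z : ℂ => C * (z ^ k - A) ^ 2 / (∑ j ∈ Finset.range k, z ^ j) ^ 2)
      (C * (1 - A) * ((k : ℂ) * A + (k : ℂ) - A + 1) / (k : ℂ) ^ 2) 1 := by
  have hk0 : (k : ℂ) ≠ 0 := Nat.cast_ne_zero.mpr (by omega)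
  have hnum : HasDerivAt (fun z : ℂ => C * (z ^ k - A) ^ 2)
      (C * ((2 : ℕ) * ((1 : ℂ) ^ k - A) ^ (2 - 1) * ((k : ℕ) * (1 : ℂ) ^ (k - 1)))) 1 :=
    (((hasDerivAt_pow k (1 : ℂ)).sub_const A).pow 2).const_mul C
  have hQ : HasDerivAt (fun z : ℂ => ∑ j ∈ Finset.range k, z ^ j)
      (∑ j ∈ Finset.range k, (j : ℂ) * (1 : ℂ) ^ (j - 1)) 1 :=
    HasDerivAt.fun_sum fun j _ => hasDerivAt_pow j (1 : ℂ)
  have hden := hQ.fun_pow 2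
  have hQ1 : (∑ j ∈ Finset.range k, (1 : ℂ) ^ j) = (k : ℂ) := by simp
  have hd0 : (∑ j ∈ Finset.range k, (1 : ℂ) ^ j) ^ 2 ≠ 0 := by
    rw [hQ1]; exact pow_ne_zero _ hk0
  have hdiv := hnum.fun_div hden hd0
  have hs' : (∑ j ∈ Finset.range k, (j : ℂ)) = (k : ℂ) * ((k : ℂ) - 1) / 2 := by
    refine eq_div_of_mul_eq two_ne_zero ?_
    have h2 := Finset.sum_range_id_mul_two k
    calc (∑ j ∈ Finset.range k, (j : ℂ)) * 2
        = (((∑ j ∈ Finset.range k, j) * 2 : ℕ) : ℂ) := by push_cast; ring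
      _ = ((k * (k - 1) : ℕ) : ℂ) := by rw [h2]
      _ = (k : ℂ) * ((k : ℂ) - 1) := by
          push_cast [Nat.cast_sub (show 1 ≤ k by omega)]; ring
  refine hdiv.congr_deriv ?_
  simp only [one_pow, mul_one, pow_one, hQ1, Finset.sum_const, Finset.card_range, nsmul_eq_mul]
  rw [hs']
  field_simp
  ring

/-- For all sufficiently small radii `r`, the residue of `G·dh` at `z = 1`,
computed as `(2πi)⁻¹` times the contour integral over the circle of radius `r`
centered at `1`, equals `ρ (a^k - 1)(k a^k + k - a^k + 1)/k²`. Here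
`G(z) = ρ z (z^k - a^k)` and `f(z) = (a^k - z^k)/(z (z^k - 1)^2)`. -/
theorem stmt_6 (k : ℕ) (hk : 2 ≤ k) (a ρ : ℝ) (ha0 : 0 < a) (ha1 : a < 1)
    (hρ : 0 < ρ)
    (G f : ℂ → ℂ)
    (hG : ∀ z : ℂ, G z = (ρ : ℂ) * z * (z ^ k - (a : ℂ) ^ k))
    (hf : ∀ z : ℂ, f z = ((a : ℂ) ^ k - z ^ k) / (z * (z ^ k - 1) ^ 2)) :
    ∃ r₀ > 0, ∀ r : ℝ, 0 < r → r < r₀ →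
      (2 * Real.pi * Complex.I)⁻¹ * (∮ z in C(1, r), G z * f z) =
        (ρ : ℂ) * ((a : ℂ) ^ k - 1) *
          ((k : ℂ) * (a : ℂ) ^ k + (k : ℂ) - (a : ℂ) ^ k + 1) / (k : ℂ) ^ 2 := by
  have hk0 : (k : ℂ) ≠ 0 := Nat.cast_ne_zero.mpr (by omega)
  set A : ℂ := (a : ℂ) ^ k with hA
  set Q : ℂ → ℂ := fun z => ∑ j ∈ Finset.range k, z ^ j with hQdef
  have hQcont : Continuous Q := continuous_finset_sum _ fun j _ => continuous_pow j
  have hQdiff : Differentiable ℂ Q := Differentiable.fun_sum fun j _ => differentiable_pow j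
  have hQ1 : Q 1 = (k : ℂ) := by simp [hQdef]
  -- find δ with Q ≠ 0 on ball 1 δ
  obtain ⟨δ, hδ0, hδ⟩ : ∃ δ > 0, ∀ z ∈ ball (1 : ℂ) δ, Q z ≠ 0 := by
    have hopen : IsOpen {z : ℂ | Q z ≠ 0} := (isOpen_compl_singleton).preimage hQcont
    obtain ⟨δ, hδ0, hδ⟩ := Metric.isOpen_iff.mp hopen 1 (by simp [hQ1, hk0])
    exact ⟨δ, hδ0, fun z hz => hδ hz⟩
  set φ : ℂ → ℂ := fun z => -(ρ : ℂ) * (z ^ k - A) ^ 2 / (Q z) ^ 2 with hφdef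
  set T : ℂ := -(ρ : ℂ) * (1 - A) * ((k : ℂ) * A + (k : ℂ) - A + 1) / (k : ℂ) ^ 2 with hT
  have hφT : HasDerivAt φ T 1 := by
    rw [hφdef, hT]; exact my_hasDerivAt_phi k hk A (-(ρ : ℂ))
  set ψ : ℂ → ℂ := Function.update (fun z => (φ z - φ 1) / (z - 1)) 1 T with hψdef
  have hψ1 : ψ 1 = T := Function.update_self _ _ _
  have hψne : ∀ z : ℂ, z ≠ 1 → ψ z = (φ z - φ 1) / (z - 1) := fun z hz =>
    Function.update_of_ne hz _ _
  have hφdiffAt : ∀ z : ℂ, Q z ≠ 0 → DifferentiableAt ℂ φ z := by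
    intro z hz
    rw [hφdef]
    exact DifferentiableAt.div
      ((((differentiableAt_pow k).sub_const A).pow 2).const_mul _)
      ((hQdiff z).pow 2) (pow_ne_zero 2 hz)
  have hψdiffAt : ∀ z : ℂ, z ≠ 1 → Q z ≠ 0 → DifferentiableAt ℂ ψ z := by
    intro z hz1 hzQ
    have hg : DifferentiableAt ℂ (fun w => (φ w - φ 1) / (w - 1)) z :=
      ((hφdiffAt z hzQ).sub_const _).div (differentiableAt_id.sub_const 1)
        (sub_ne_zero.mpr hz1)
    refine hg.congr_of_eventuallyEq ?_
    filter_upwards [isOpen_compl_singleton.mem_nhds hz1] with w hw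
    exact hψne w hw
  refine ⟨min δ (1 / 2), by positivity, fun r hr0 hrr => ?_⟩
  have hrδ : r < δ := lt_of_lt_of_le hrr (min_le_left _ _)
  have hr2 : r < 1 / 2 := lt_of_lt_of_le hrr (min_le_right _ _)
  have h2πI : (2 * (Real.pi : ℂ) * Complex.I) ≠ 0 := Complex.two_pi_I_ne_zero
  -- equality of integrands on the sphere
  have hEqOn : Set.EqOn (fun z => G z * f z)
      (fun z => φ 1 * (z - 1) ^ (-2 : ℤ) + (z - 1)⁻¹ * ψ z) (sphere (1 : ℂ) r) := by
    intro z hz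
    have hzr : dist z 1 = r := mem_sphere.mp hz
    have hz1 : z ≠ 1 := by
      intro h; rw [h, dist_self] at hzr; exact hr0.ne hzr
    have hz1' : z - 1 ≠ 0 := sub_ne_zero.mpr hz1
    have hz0 : z ≠ 0 := by
      intro h
      rw [h] at hzr
      rw [show dist (0:ℂ) 1 = 1 by simp [dist_eq]] at hzr
      linarith
    have hzQ : Q z ≠ 0 := hδ z (by rw [mem_ball, hzr]; exact hrδ)
    have hQ1ne : Q 1 ≠ 0 := by rw [hQ1]; exact hk0
    have hgeom : z ^ k - 1 = (z - 1) * Q z := by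
      rw [hQdef]; rw [← geom_sum_mul]; ring
    have hzp : (z - 1) ^ (-2 : ℤ) = ((z - 1) ^ 2)⁻¹ := by
      rw [zpow_neg]; norm_cast
    have hstep : φ 1 * ((z - 1) ^ 2)⁻¹ + (z - 1)⁻¹ * ((φ z - φ 1) / (z - 1))
        = φ z / (z - 1) ^ 2 := by
      field_simp
      ring
    have hstep2 : G z * f z = φ z / (z - 1) ^ 2 := by
      rw [hG z, hf z, hφdef]
      simp only
      rw [hgeom]
      field_simp
      ring
    show G z * f z = φ 1 * (z - 1) ^ (-2 : ℤ) + (z - 1)⁻¹ * ψ z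
    rw [hzp, hψne z hz1, hstep, hstep2]
  -- integrability
  have hsph1 : ∀ z ∈ sphere (1 : ℂ) r, z - 1 ≠ 0 := by
    intro z hz
    refine sub_ne_zero.mpr fun h => hr0.ne ?_
    rw [mem_sphere, h, dist_self] at hz
    exact hz
  have hint1 : CircleIntegrable (fun z => φ 1 * (z - 1) ^ (-2 : ℤ)) 1 r := by
    refine ContinuousOn.circleIntegrable hr0.le ?_
    refine continuousOn_const.mul ?_
    intro z hz
    exact ((continuousAt_id.sub continuousAt_const).zpow₀ (-2)
      (Or.inl (hsph1 z hz))).continuousWithinAt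
  have hψcont : ContinuousOn ψ (closedBall (1 : ℂ) r) := by
    intro x hx
    by_cases hx1 : x = 1
    · subst hx1
      rw [hψdef]
      exact hφT.continuousAt_div.continuousWithinAt
    · have hxQ : Q x ≠ 0 := hδ x (mem_ball.mpr (lt_of_le_of_lt (mem_closedBall.mp hx) hrδ))
      exact ((hψdiffAt x hx1 hxQ).continuousAt).continuousWithinAt
  have hint2 : CircleIntegrable (fun z => (z - 1)⁻¹ * ψ z) 1 r := by
    refine ContinuousOn.circleIntegrable hr0.le ?_
    refine ContinuousOn.mul ?_ (hψcont.mono sphere_subset_closedBall)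
    refine ((continuousOn_id.sub continuousOn_const).inv₀ ?_)
    exact fun z hz => hsph1 z hz
  -- the Cauchy integral formula piece
  have key := Complex.two_pi_I_inv_smul_circleIntegral_sub_inv_smul_of_differentiable_on_off_countable
    (s := {1}) (countable_singleton 1) (mem_ball_self hr0) hψcont
    (fun x hx => hψdiffAt x (by simpa using hx.2)
      (hδ x (mem_ball.mpr (lt_trans (mem_ball.mp hx.1) hrδ))))
  simp only [smul_eq_mul, hψ1] at key
  have hI2 : (∮ z in C(1, r), (z - 1)⁻¹ * ψ z) = (2 * (Real.pi : ℂ) * Complex.I) * T := by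
    rw [← key, mul_inv_cancel_left₀ h2πI]
  have hI1 : (∮ z in C(1, r), φ 1 * (z - 1) ^ (-2 : ℤ)) = 0 := by
    rw [circleIntegral.integral_const_mul,
      circleIntegral.integral_sub_zpow_of_ne (by decide) 1 1 r, mul_zero]
  rw [circleIntegral.integral_congr hr0.le hEqOn, my_integral_add hint1 hint2, hI1, hI2,
    zero_add, inv_mul_cancel_left₀ h2πI, hT]
  ring
end

section
/- Set ρ = ρ₀ := √((k+1)/((1 − a^k)·(k·a^k + k − a^k + 1))). Then there exists r₀ > 0 such that for every real r with 0 < r < r₀, the contour integral of the function z ↦ (1/G(z) + G(z))·f(z) over the circle of radius r centered at 1 (traversed once counterclockwise) equals 0; i.e., the residue of (1/G + G)·dh at z = 1 vanishes. -/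
open Metric Finset

/-- With `ρ = ρ₀ = √((k+1)/((1-a^k)(k a^k + k - a^k + 1)))`, for all sufficiently
small radii `r` the contour integral of `(1/G + G)·f` over the circle of radius `r`
centered at `1` vanishes: the residue of `(1/G + G)·dh` at `z = 1` is zero.
Here `G(z) = ρ₀ z (z^k - a^k)` and `f(z) = (a^k - z^k)/(z (z^k - 1)^2)`. -/
theorem stmt_7 (k : ℕ) (hk : 2 ≤ k) (a ρ₀ : ℝ) (ha0 : 0 < a) (ha1 : a < 1)
    (hρ₀ : ρ₀ = Real.sqrt (((k : ℝ) + 1) /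
      ((1 - a ^ k) * ((k : ℝ) * a ^ k + (k : ℝ) - a ^ k + 1))))
    (G f : ℂ → ℂ)
    (hG : ∀ z : ℂ, G z = (ρ₀ : ℂ) * z * (z ^ k - (a : ℂ) ^ k))
    (hf : ∀ z : ℂ, f z = ((a : ℂ) ^ k - z ^ k) / (z * (z ^ k - 1) ^ 2)) :
    ∃ r₀ > 0, ∀ r : ℝ, 0 < r → r < r₀ →
      (∮ z in C(1, r), (1 / G z + G z) * f z) = 0 := by
  -- basic real facts
  have hak0 : (0:ℝ) < a ^ k := pow_pos ha0 k
  have hak1 : a ^ k < 1 := pow_lt_one₀ ha0.le ha1 (by omega)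
  have hden : (0:ℝ) < (1 - a ^ k) * ((k : ℝ) * a ^ k + (k : ℝ) - a ^ k + 1) := by
    have hk1 : (1:ℝ) ≤ (k:ℝ) := by exact_mod_cast Nat.one_le_of_lt hk
    have : (0:ℝ) < (k : ℝ) * a ^ k + (k : ℝ) - a ^ k + 1 := by nlinarith
    nlinarith
  have hρpos : 0 < ρ₀ := by rw [hρ₀]; positivity
  have hkey : ρ₀ ^ 2 * ((1 - a ^ k) * ((k : ℝ) * a ^ k + (k : ℝ) - a ^ k + 1)) = (k:ℝ) + 1 := by
    rw [hρ₀, Real.sq_sqrt (by positivity)]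
    rw [div_mul_cancel₀ _ hden.ne']
  -- complex abbreviations
  set c : ℂ := (ρ₀ : ℂ) with hc
  set u : ℂ := (a : ℂ) ^ k with hu
  have hcne : c ≠ 0 := by
    simp only [hc, Ne, Complex.ofReal_eq_zero]; exact hρpos.ne'
  have hukey : c ^ 2 * ((1 - u) * ((k:ℂ) * u + (k:ℂ) - u + 1)) = (k:ℂ) + 1 := by
    rw [hc, hu, ← Complex.ofReal_pow]
    exact_mod_cast congrArg (Complex.ofReal) hkey
  have hune : u ≠ 1 := by
    rw [hu, ← Complex.ofReal_pow]
    intro h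
    have : (a:ℝ)^k = 1 := by exact_mod_cast h
    linarith
  set S : ℂ → ℂ := fun z => ∑ i ∈ Finset.range k, z ^ i with hS
  have hS1 : S 1 = (k : ℂ) := by simp [hS]
  have hSdiff : Differentiable ℂ S := by
    apply Differentiable.fun_sum
    intro i _
    exact differentiable_pow i
  set N : ℂ → ℂ := fun z => -(1 + c ^ 2 * z ^ 2 * (z ^ k - u) ^ 2) with hN
  set D : ℂ → ℂ := fun z => c * (z ^ 2 * S z ^ 2) with hD
  set g : ℂ → ℂ := fun z => N z / D z with hg
  -- open set
  set U : Set ℂ := {z | z ≠ 0 ∧ S z ≠ 0 ∧ z ^ k ≠ u} with hU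
  have hUopen : IsOpen U := by
    have h1 : IsOpen {z : ℂ | z ≠ 0} := isOpen_ne
    have h2 : IsOpen {z : ℂ | S z ≠ 0} := isOpen_ne.preimage hSdiff.continuous
    have h3 : IsOpen {z : ℂ | z ^ k ≠ u} :=
      isOpen_ne.preimage (continuous_pow k)
    exact h1.inter (h2.inter h3)
  have h1U : (1 : ℂ) ∈ U := by
    refine ⟨one_ne_zero, ?_, ?_⟩
    · rw [hS1]
      exact_mod_cast (by omega : k ≠ 0)
    · simpa using Ne.symm hune
  obtain ⟨ε, hε, hball⟩ := Metric.isOpen_iff.mp hUopen 1 h1U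
  refine ⟨ε, hε, fun r hr hrε => ?_⟩
  have hsub : closedBall (1:ℂ) r ⊆ U := fun z hz =>
    hball (lt_of_le_of_lt (mem_closedBall.mp hz) hrε)
  -- D ≠ 0 on closedBall
  have hDne : ∀ z ∈ closedBall (1:ℂ) r, D z ≠ 0 := by
    intro z hz
    obtain ⟨hz0, hzS, _⟩ := hsub hz
    simp only [hD]
    exact mul_ne_zero hcne (mul_ne_zero (pow_ne_zero _ hz0) (pow_ne_zero _ hzS))
  have hNdiff : Differentiable ℂ N := by
    simp only [hN]
    fun_prop
  have hDdiff : Differentiable ℂ D := by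
    simp only [hD]
    exact (differentiable_const c).mul ((differentiable_pow 2).mul (hSdiff.pow 2))
  have hgdiff : DifferentiableOn ℂ g (closedBall 1 r) :=
    (hNdiff.differentiableOn).div (hDdiff.differentiableOn) hDne
  -- power series
  have hrnn : (0 : NNReal) < r.toNNReal := Real.toNNReal_pos.mpr hr
  have hrcoe : ((r.toNNReal : ℝ)) = r := Real.coe_toNNReal r hr.le
  have hps : HasFPowerSeriesOnBall g (cauchyPowerSeries g 1 r.toNNReal) 1 r.toNNReal := by
    apply DifferentiableOn.hasFPowerSeriesOnBall _ hrnn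
    rwa [hrcoe]
  -- derivative of S at 1
  set m : ℂ := ∑ i ∈ Finset.range k, (i:ℂ) with hm
  have hSder : HasDerivAt S m 1 := by
    have : HasDerivAt S (∑ i ∈ Finset.range k, (i:ℂ) * (1:ℂ) ^ (i - 1)) 1 :=
      HasDerivAt.fun_sum fun i _ => hasDerivAt_pow i 1
    simpa [hm] using this
  have hm2 : m * 2 = (k:ℂ) * ((k:ℂ) - 1) := by
    have h2 : ((∑ i ∈ Finset.range k, i) * 2 : ℕ) = (k * (k-1) : ℕ) :=
      Finset.sum_range_id_mul_two k
    have h3 : ((∑ i ∈ Finset.range k, i : ℕ) : ℂ) * 2 = ((k * (k-1) : ℕ) : ℂ) := by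
      exact_mod_cast congrArg (Nat.cast : ℕ → ℂ) h2
    rw [hm]
    push_cast [Nat.cast_sub (by omega : 1 ≤ k)] at h3 ⊢
    exact h3
  -- derivative of N at 1
  have hz2 : HasDerivAt (fun z : ℂ => z ^ 2) 2 1 := by
    simpa using hasDerivAt_pow 2 (1:ℂ)
  have hP : HasDerivAt (fun z : ℂ => z ^ k - u) ((k:ℂ)) 1 := by
    simpa using (hasDerivAt_pow k (1:ℂ)).sub_const u
  have hP2 : HasDerivAt (fun z : ℂ => (z ^ k - u) ^ 2) (2 * (1 - u) * (k:ℂ)) 1 := by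
    simpa using hP.fun_pow 2
  have hNder : HasDerivAt N (-(c ^ 2 * 2 * (1 - u) ^ 2 + c ^ 2 * (2 * (1 - u) * (k:ℂ)))) 1 := by
    have h := (((hz2.const_mul (c ^ 2)).fun_mul hP2).const_add 1).fun_neg
    refine h.congr_deriv ?_
    simp only [one_pow]
    ring
  -- derivative of D at 1
  have hDder : HasDerivAt D (c * (2 * (k:ℂ) ^ 2 + 2 * (k:ℂ) * m)) 1 := by
    have h := (hz2.fun_mul (hSder.fun_pow 2)).const_mul c
    refine h.congr_deriv ?_
    simp only [one_pow, hS1, pow_one]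
    ring
  -- derivative of g at 1
  have hD1ne : D 1 ≠ 0 := hDne 1 (mem_closedBall_self hr.le)
  have hgder := hNder.div hDder hD1ne
  have hval : (-(c ^ 2 * 2 * (1 - u) ^ 2 + c ^ 2 * (2 * (1 - u) * (k:ℂ))) * D 1 -
      N 1 * (c * (2 * (k:ℂ) ^ 2 + 2 * (k:ℂ) * m))) / D 1 ^ 2 = 0 := by
    rw [div_eq_zero_iff]
    left
    have hD1 : D 1 = c * (k:ℂ) ^ 2 := by simp [hD, hS1]
    have hN1 : N 1 = -(1 + c ^ 2 * (1 - u) ^ 2) := by simp [hN]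
    rw [hD1, hN1]
    linear_combination (-(c * (k:ℂ) ^ 2)) * hukey +
      ((1 + c ^ 2 * (1 - u) ^ 2) * c * (k:ℂ)) * hm2
  rw [hval] at hgder
  -- conclude integral is zero
  have hd2 : HasDerivAt g ((cauchyPowerSeries g 1 r.toNNReal) 1 fun _ => 1) 1 :=
    hps.hasFPowerSeriesAt.hasDerivAt
  have huniq : (0:ℂ) = (cauchyPowerSeries g 1 r.toNNReal) 1 fun _ => 1 :=
    hgder.unique hd2
  rw [cauchyPowerSeries_apply] at huniq
  have h2pi : (2 * Real.pi * Complex.I : ℂ) ≠ 0 := by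
    simp [Real.pi_ne_zero, Complex.I_ne_zero]
  have hint : (∮ z in C(1, (r.toNNReal : ℝ)), (1 / (z - 1)) ^ 1 • (z - 1)⁻¹ • g z) = 0 := by
    have := huniq.symm
    rwa [smul_eq_zero_iff_right (inv_ne_zero h2pi)] at this
  rw [hrcoe] at hint
  rw [← hint]
  apply circleIntegral.integral_congr hr.le
  intro z hz
  have hzU := hsub (sphere_subset_closedBall hz)
  obtain ⟨hz0, hzS, hzP0⟩ := hzU
  have hz1 : z ≠ 1 := by
    intro h
    rw [mem_sphere, h] at hz
    simp at hz
    exact hr.ne' hz.symm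
  have hz1' : z - 1 ≠ 0 := sub_ne_zero.mpr hz1
  have hzP : z ^ k - u ≠ 0 := sub_ne_zero.mpr hzP0
  have hgeom : z ^ k - 1 = (z - 1) * S z := by
    rw [hS]
    have := geom_sum_mul z k
    linear_combination -this
  have hDz : (c : ℂ) * (z ^ 2 * S z ^ 2) ≠ 0 :=
    mul_ne_zero hcne (mul_ne_zero (pow_ne_zero _ hz0) (pow_ne_zero _ hzS))
  simp only [hG, hf, hg, hN, hD, smul_eq_mul, pow_one]
  rw [hgeom]
  trans (-(1 + c ^ 2 * z ^ 2 * (z ^ k - u) ^ 2) / ((z - 1) ^ 2 * (c * (z ^ 2 * S z ^ 2))))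
  · field_simp
    ring
  · field_simp
    try ring
    try exact Or.inl trivial
end

section
/- Set ρ = ρ₀ := √((k+1)/((1 − a^k)·(k·a^k + k − a^k + 1))). Let j be an integer and ζ = exp(2πi·j/k). Then there exists r₀ > 0 such that for every real r with 0 < r < r₀, (2πi)⁻¹ times the contour integral of the function z ↦ (1/G(z) − G(z))·f(z) over the circle of radius r centered at ζ (traversed once counterclockwise) equals 2·(k+1)·cos(2πj/k)/(ρ₀·k²). In particular this residue is real, so there is no x₁-period around ζ. -/
open Metric Complex

private theorem my_circleIntegral_add {f g : ℂ → ℂ} {c : ℂ} {R : ℝ}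
    (hf : CircleIntegrable f c R) (hg : CircleIntegrable g c R) :
    (∮ z in C(c, R), f z + g z) = (∮ z in C(c, R), f z) + ∮ z in C(c, R), g z := by
  simp only [circleIntegral, smul_add, intervalIntegral.integral_add hf.out hg.out]

/-- With `ρ = ρ₀ = √((k+1)/((1-a^k)(k a^k + k - a^k + 1)))` and
`ζ = exp(2πi j/k)`, for all sufficiently small radii `r` the residue of
`(1/G - G)·dh` at `ζ`, computed as `(2πi)⁻¹` times the contour integral over the
circle of radius `r` centered at `ζ`, equals `2 (k+1) cos(2πj/k)/(ρ₀ k²)`;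
in particular it is real, so there is no `x₁`-period around `ζ`. -/
theorem stmt_8 (k : ℕ) (hk : 2 ≤ k) (a ρ₀ : ℝ) (ha0 : 0 < a) (ha1 : a < 1)
    (hρ₀ : ρ₀ = Real.sqrt (((k : ℝ) + 1) /
      ((1 - a ^ k) * ((k : ℝ) * a ^ k + (k : ℝ) - a ^ k + 1))))
    (G f : ℂ → ℂ)
    (hG : ∀ z : ℂ, G z = (ρ₀ : ℂ) * z * (z ^ k - (a : ℂ) ^ k))
    (hf : ∀ z : ℂ, f z = ((a : ℂ) ^ k - z ^ k) / (z * (z ^ k - 1) ^ 2))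
    (j : ℤ) (ζ : ℂ)
    (hζ : ζ = Complex.exp (2 * Real.pi * Complex.I * (j : ℂ) / (k : ℂ))) :
    ∃ r₀ > 0, ∀ r : ℝ, 0 < r → r < r₀ →
      (2 * Real.pi * Complex.I)⁻¹ * (∮ z in C(ζ, r), (1 / G z - G z) * f z) =
        ((2 * ((k : ℝ) + 1) * Real.cos (2 * Real.pi * (j : ℝ) / (k : ℝ)) /
          (ρ₀ * (k : ℝ) ^ 2) : ℝ) : ℂ) := by
  -- ### real preliminaries
  have hkR : (2 : ℝ) ≤ (k : ℝ) := by exact_mod_cast hk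
  have hak1 : a ^ k < 1 := pow_lt_one₀ ha0.le ha1 (by omega)
  have hakpos : 0 < a ^ k := pow_pos ha0 k
  have hD1 : (0 : ℝ) < 1 - a ^ k := by linarith
  have hD2 : (0 : ℝ) < (k : ℝ) * a ^ k + (k : ℝ) - a ^ k + 1 := by nlinarith
  have hDpos : (0 : ℝ) < (1 - a ^ k) * ((k : ℝ) * a ^ k + (k : ℝ) - a ^ k + 1) :=
    mul_pos hD1 hD2
  have hρpos : 0 < ρ₀ := by
    rw [hρ₀]
    exact Real.sqrt_pos.mpr (div_pos (by linarith) hDpos)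
  have hkey : ρ₀ ^ 2 * ((1 - a ^ k) * ((k : ℝ) * a ^ k + (k : ℝ) - a ^ k + 1)) = (k : ℝ) + 1 := by
    rw [hρ₀, Real.sq_sqrt (le_of_lt (div_pos (by linarith) hDpos)),
      div_mul_cancel₀ _ hDpos.ne']
  -- ### complex preliminaries
  have hk0 : (k : ℂ) ≠ 0 := Nat.cast_ne_zero.mpr (by omega)
  have hρ : (ρ₀ : ℂ) ≠ 0 := ofReal_ne_zero.mpr hρpos.ne'
  obtain ⟨A, hA⟩ : ∃ A : ℂ, A = (a : ℂ) ^ k := ⟨_, rfl⟩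
  rw [← hA] at hG hf
  have hkeyC : (ρ₀ : ℂ) ^ 2 * ((1 - A) * ((k : ℂ) * A + (k : ℂ) - A + 1)) = (k : ℂ) + 1 := by
    rw [hA]; push_cast
    exact_mod_cast congrArg (fun x : ℝ => (x : ℂ)) hkey
  have hA1 : (1 : ℂ) - A ≠ 0 := by
    rw [hA, sub_ne_zero]
    intro h
    have : (1 : ℝ) = a ^ k := by exact_mod_cast h
    linarith
  have hζ0 : ζ ≠ 0 := by rw [hζ]; exact Complex.exp_ne_zero _
  have hζk : ζ ^ k = 1 := by
    rw [hζ, ← Complex.exp_nat_mul,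
      show (k : ℂ) * (2 * ↑Real.pi * I * (j : ℂ) / (k : ℂ)) = (j : ℂ) * (2 * ↑Real.pi * I) by
        field_simp]
    exact Complex.exp_int_mul_two_pi_mul_I j
  -- ### the polynomial `q` with `q z * (z - ζ) = z ^ k - 1`
  obtain ⟨q, hqdef⟩ : ∃ q : ℂ → ℂ, ∀ z, q z = ∑ i ∈ Finset.range k, z ^ i * ζ ^ (k - 1 - i) :=
    ⟨_, fun _ => rfl⟩
  have hqfac : ∀ z : ℂ, q z * (z - ζ) = z ^ k - 1 := by
    intro z
    rw [hqdef z]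
    simpa [hζk] using geom_sum₂_mul z ζ k
  have hzkm1 : ζ ^ (k - 1) = ζ⁻¹ := by
    refine eq_inv_of_mul_eq_one_left ?_
    rw [← pow_succ, show k - 1 + 1 = k by omega, hζk]
  have hzkm2 : ζ ^ (k - 2) = ζ⁻¹ * ζ⁻¹ := by
    have h2 : ζ ^ (k - 2) * (ζ * ζ) = 1 := by
      rw [show ζ * ζ = ζ ^ 2 by ring, ← pow_add, show k - 2 + 2 = k by omega, hζk]
    rw [eq_inv_of_mul_eq_one_left h2, mul_inv]
  have hqζ : q ζ = (k : ℂ) * ζ⁻¹ := by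
    rw [hqdef ζ]
    have h1 : ∀ i ∈ Finset.range k, ζ ^ i * ζ ^ (k - 1 - i) = ζ ^ (k - 1) := by
      intro i hi
      rw [← pow_add]
      congr 1
      have := Finset.mem_range.mp hi
      omega
    rw [Finset.sum_congr rfl h1, Finset.sum_const, Finset.card_range, nsmul_eq_mul, hzkm1]
  have hqζ0 : q ζ ≠ 0 := by
    rw [hqζ]
    exact mul_ne_zero hk0 (inv_ne_zero hζ0)
  have hsum : (∑ i ∈ Finset.range k, ((i : ℂ) * ζ ^ (i - 1) * ζ ^ (k - 1 - i)))
      = (k : ℂ) * ((k : ℂ) - 1) / 2 * (ζ⁻¹ * ζ⁻¹) := by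
    have h1 : ∀ i ∈ Finset.range k, (i : ℂ) * ζ ^ (i - 1) * ζ ^ (k - 1 - i)
        = (i : ℂ) * ζ ^ (k - 2) := by
      intro i hi
      rcases Nat.eq_zero_or_pos i with h | h
      · simp [h]
      · rw [mul_assoc, ← pow_add]
        have := Finset.mem_range.mp hi
        congr 2
        omega
    rw [Finset.sum_congr rfl h1, ← Finset.sum_mul, hzkm2]
    congr 1
    have h2 := Finset.sum_range_id_mul_two k
    have h4 : ((k * (k - 1) : ℕ) : ℂ) = (k : ℂ) * ((k : ℂ) - 1) := by
      push_cast [Nat.cast_sub (by omega : 1 ≤ k)]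
      ring
    have h3 : ((∑ i ∈ Finset.range k, i : ℕ) : ℂ) * 2 = (k : ℂ) * ((k : ℂ) - 1) := by
      rw [← h4, ← h2]; push_cast; ring
    push_cast at h3 ⊢
    linear_combination h3 / 2
  have hqfun : q = fun z => ∑ i ∈ Finset.range k, z ^ i * ζ ^ (k - 1 - i) := funext hqdef
  have hq' : HasDerivAt q ((k : ℂ) * ((k : ℂ) - 1) / 2 * (ζ⁻¹ * ζ⁻¹)) ζ := by
    rw [← hsum, hqfun]
    exact HasDerivAt.fun_sum fun i _ => (hasDerivAt_pow i ζ).mul_const (ζ ^ (k - 1 - i))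
  have hqdiff : Differentiable ℂ q := by
    rw [hqfun]
    exact Differentiable.fun_sum fun i _ => (differentiable_pow i).mul_const (ζ ^ (k - 1 - i))
  -- ### the auxiliary holomorphic function `g`
  obtain ⟨g, hgdef⟩ : ∃ g : ℂ → ℂ, ∀ z, g z = ((ρ₀ : ℂ) ^ 2 * z ^ 2 * (z ^ k - A) ^ 2 - 1)
      / ((ρ₀ : ℂ) * z ^ 2 * q z ^ 2) := ⟨_, fun _ => rfl⟩
  have hgfun : g = fun z => ((ρ₀ : ℂ) ^ 2 * z ^ 2 * (z ^ k - A) ^ 2 - 1)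
      / ((ρ₀ : ℂ) * z ^ 2 * q z ^ 2) := funext hgdef
  -- ### the good open set
  have hUdef : ∃ U : Set ℂ, U = {z : ℂ | z * q z * (z ^ k - A) ≠ 0} := ⟨_, rfl⟩
  obtain ⟨U, hUdef⟩ := hUdef
  have hUopen : IsOpen U := by
    have hcont : Continuous fun z : ℂ => z * q z * (z ^ k - A) :=
      (continuous_id.mul hqdiff.continuous).mul ((continuous_pow k).sub continuous_const)
    rw [hUdef]
    exact isOpen_compl_singleton.preimage hcont
  have hζU : ζ ∈ U := by
    rw [hUdef]
    simp only [Set.mem_setOf_eq, hζk]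
    exact mul_ne_zero (mul_ne_zero hζ0 hqζ0) hA1
  obtain ⟨ε, hε0, hεsub⟩ := Metric.isOpen_iff.mp hUopen ζ hζU
  refine ⟨ε, hε0, fun r hr0 hrε => ?_⟩
  -- facts about points of `U`
  have hUfacts : ∀ z ∈ U, z ≠ 0 ∧ q z ≠ 0 ∧ z ^ k - A ≠ 0 := by
    intro z hz
    rw [hUdef] at hz
    simp only [Set.mem_setOf_eq, mul_ne_zero_iff] at hz
    exact ⟨hz.1.1, hz.1.2, hz.2⟩
  -- `g` is holomorphic on `ball ζ ε`
  have hgd : DifferentiableOn ℂ g (ball ζ ε) := by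
    intro z hz
    obtain ⟨hz0, hqz, hYz⟩ := hUfacts z (hεsub hz)
    have hden : DifferentiableAt ℂ (fun z : ℂ => (ρ₀ : ℂ) * z ^ 2 * q z ^ 2) z :=
      (((differentiable_pow 2).const_mul ((ρ₀ : ℂ))).mul (hqdiff.pow 2)) z
    have hnum : DifferentiableAt ℂ
        (fun z : ℂ => (ρ₀ : ℂ) ^ 2 * z ^ 2 * (z ^ k - A) ^ 2 - 1) z := by
      fun_prop
    have hdne : (ρ₀ : ℂ) * z ^ 2 * q z ^ 2 ≠ 0 :=
      mul_ne_zero (mul_ne_zero hρ (pow_ne_zero 2 hz0)) (pow_ne_zero 2 hqz)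
    rw [hgfun]
    exact (hnum.div hden hdne).differentiableWithinAt
  have hgd' : DifferentiableOn ℂ (dslope g ζ) (ball ζ ε) :=
    (differentiableOn_dslope (isOpen_ball.mem_nhds (mem_ball_self hε0))).mpr hgd
  have hsub1 : sphere ζ r ⊆ ball ζ ε :=
    sphere_subset_closedBall.trans (closedBall_subset_ball hrε)
  -- ### pointwise identity on the sphere
  have hEq : Set.EqOn (fun z => (1 / G z - G z) * f z)
      (fun z => (z - ζ)⁻¹ • dslope g ζ z + g ζ • (z - ζ) ^ (-2 : ℤ)) (sphere ζ r) := by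
    intro z hz
    have hzζ : z ≠ ζ := ne_of_mem_sphere hz hr0.ne'
    obtain ⟨hz0, hqz, hYz⟩ := hUfacts z (hεsub (hsub1 hz))
    have hzζ' : z - ζ ≠ 0 := sub_ne_zero.mpr hzζ
    have hzp : (z - ζ) ^ (-2 : ℤ) = ((z - ζ) ^ 2)⁻¹ := by
      rw [zpow_neg, show ((2:ℤ)) = ((2:ℕ):ℤ) from rfl, zpow_natCast]
    simp only [dslope_of_ne g hzζ, slope_def_field, hzp, smul_eq_mul]
    have hres : (z - ζ)⁻¹ * ((g z - g ζ) / (z - ζ)) + g ζ * ((z - ζ) ^ 2)⁻¹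
        = g z / (z - ζ) ^ 2 := by
      field_simp
      ring
    rw [hres, hG z, hf z, ← hqfac z, hgdef z, div_div]
    have hGne : (ρ₀ : ℂ) * z * (z ^ k - A) ≠ 0 := mul_ne_zero (mul_ne_zero hρ hz0) hYz
    have hP : (1 : ℂ) / ((ρ₀ : ℂ) * z * (z ^ k - A)) - (ρ₀ : ℂ) * z * (z ^ k - A)
        = (1 - ((ρ₀ : ℂ) * z * (z ^ k - A)) ^ 2) / ((ρ₀ : ℂ) * z * (z ^ k - A)) := by
      field_simp
    rw [hP, div_mul_div_comm]
    have hd1 : (ρ₀ : ℂ) * z * (z ^ k - A) * (z * (q z * (z - ζ)) ^ 2) ≠ 0 :=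
      mul_ne_zero hGne (mul_ne_zero hz0 (pow_ne_zero 2 (mul_ne_zero hqz hzζ')))
    have hd2 : (ρ₀ : ℂ) * z ^ 2 * q z ^ 2 * (z - ζ) ^ 2 ≠ 0 :=
      mul_ne_zero (mul_ne_zero (mul_ne_zero hρ (pow_ne_zero 2 hz0)) (pow_ne_zero 2 hqz))
        (pow_ne_zero 2 hzζ')
    rw [div_eq_div_iff hd1 hd2]
    ring
  rw [circleIntegral.integral_congr hr0.le hEq]
  -- ### integrability of both pieces
  have hc1 : ContinuousOn (fun z => (z - ζ)⁻¹ • dslope g ζ z) (sphere ζ r) := by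
    refine ContinuousOn.smul (ContinuousOn.inv₀ ((continuousOn_id.sub continuousOn_const))
      fun z hz => sub_ne_zero.mpr (ne_of_mem_sphere hz hr0.ne')) ?_
    exact (hgd'.continuousOn).mono hsub1
  have hc2 : ContinuousOn (fun z => g ζ • (z - ζ) ^ (-2 : ℤ)) (sphere ζ r) := by
    refine ContinuousOn.fun_smul continuousOn_const ?_
    exact (continuousOn_id.sub continuousOn_const).zpow₀ _
      fun z hz => Or.inl (sub_ne_zero.mpr (ne_of_mem_sphere hz hr0.ne'))
  rw [my_circleIntegral_add (hc1.circleIntegrable hr0.le) (hc2.circleIntegrable hr0.le),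
    circleIntegral.integral_smul, circleIntegral.integral_sub_zpow_of_ne (by decide) ζ ζ r,
    smul_zero, add_zero]
  -- ### Cauchy integral formula
  have hcauchy := Complex.two_pi_I_inv_smul_circleIntegral_sub_inv_smul_of_differentiable_on_off_countable
    (Set.countable_empty) (mem_ball_self hr0)
    ((hgd'.continuousOn).mono (closedBall_subset_ball hrε))
    (fun x hx => (hgd' x (ball_subset_ball hrε.le hx.1)).differentiableAt
      (isOpen_ball.mem_nhds (ball_subset_ball hrε.le hx.1)))
  rw [smul_eq_mul] at hcauchy
  rw [hcauchy, dslope_same]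
  -- ### computing the derivative
  have hX : HasDerivAt (fun z : ℂ => z ^ k - A) ((k : ℂ) * ζ ^ (k - 1)) ζ :=
    (hasDerivAt_pow k ζ).sub_const A
  have hnum : HasDerivAt (fun z : ℂ => (ρ₀ : ℂ) ^ 2 * z ^ 2 * (z ^ k - A) ^ 2 - 1)
      (((ρ₀ : ℂ) ^ 2 * ((2 : ℕ) * ζ ^ (2 - 1))) * (ζ ^ k - A) ^ 2
        + ((ρ₀ : ℂ) ^ 2 * ζ ^ 2) * ((2 : ℕ) * (ζ ^ k - A) ^ (2 - 1) * ((k : ℂ) * ζ ^ (k - 1)))) ζ :=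
    (((hasDerivAt_pow 2 ζ).const_mul ((ρ₀ : ℂ) ^ 2)).mul (hX.pow 2)).sub_const 1
  have hden : HasDerivAt (fun z : ℂ => (ρ₀ : ℂ) * z ^ 2 * q z ^ 2)
      (((ρ₀ : ℂ) * ((2 : ℕ) * ζ ^ (2 - 1))) * q ζ ^ 2
        + ((ρ₀ : ℂ) * ζ ^ 2) * ((2 : ℕ) * q ζ ^ (2 - 1)
          * ((k : ℂ) * ((k : ℂ) - 1) / 2 * (ζ⁻¹ * ζ⁻¹)))) ζ :=
    ((hasDerivAt_pow 2 ζ).const_mul (ρ₀ : ℂ)).mul (hq'.pow 2)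
  have hdne : (ρ₀ : ℂ) * ζ ^ 2 * q ζ ^ 2 ≠ 0 :=
    mul_ne_zero (mul_ne_zero hρ (pow_ne_zero 2 hζ0)) (pow_ne_zero 2 hqζ0)
  have hgder := (hnum.fun_div hden hdne).deriv
  rw [hgfun, hgder, hζk, hzkm1, hqζ]
  -- ### final algebra
  have hRHS : ((2 * ((k : ℝ) + 1) * Real.cos (2 * Real.pi * (j : ℝ) / (k : ℝ)) /
      (ρ₀ * (k : ℝ) ^ 2) : ℝ) : ℂ)
      = ((k : ℂ) + 1) * (ζ + ζ⁻¹) / ((ρ₀ : ℂ) * (k : ℂ) ^ 2) := by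
    have hcos : (Real.cos (2 * Real.pi * (j : ℝ) / (k : ℝ)) : ℂ) = (ζ + ζ⁻¹) / 2 := by
      rw [Complex.ofReal_cos, Complex.cos, hζ, ← Complex.exp_neg]
      congr 2
      · push_cast; ring
      · push_cast; ring
    push_cast [hcos]
    ring
  rw [hRHS]
  set w : ℂ := ζ⁻¹ with hwdef
  have hw : ζ * w = 1 := mul_inv_cancel₀ hζ0
  have hw0 : w ≠ 0 := inv_ne_zero hζ0
  have hD2' : (((ρ₀ : ℂ)) * ζ ^ 2 * ((k : ℂ) * w) ^ 2) ^ 2 ≠ 0 :=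
    pow_ne_zero 2 (mul_ne_zero (mul_ne_zero hρ (pow_ne_zero 2 hζ0))
      (pow_ne_zero 2 (mul_ne_zero hk0 hw0)))
  have hRk : (ρ₀ : ℂ) * (k : ℂ) ^ 2 ≠ 0 := mul_ne_zero hρ (pow_ne_zero 2 hk0)
  rw [div_eq_div_iff hD2' hRk]
  push_cast
  linear_combination ((-1)*(ρ₀:ℂ)^2*ζ*(k:ℂ)^4 + (-1)*(ρ₀:ℂ)^2*ζ*(k:ℂ)^5 + (-2)*(ρ₀:ℂ)^2*ζ*w^2*(k:ℂ)^4 + (-1)*(ρ₀:ℂ)^2*ζ^2*w*(k:ℂ)^4 + (-1)*(ρ₀:ℂ)^2*ζ^2*w*(k:ℂ)^5 + (-1)*(ρ₀:ℂ)^2*ζ^2*w^3*(k:ℂ)^4 + (-1)*(ρ₀:ℂ)^2*ζ^2*w^3*(k:ℂ)^5 + (-1)*(ρ₀:ℂ)^2*ζ^3*w^2*(k:ℂ)^4 + (-1)*(ρ₀:ℂ)^2*ζ^3*w^2*(k:ℂ)^5 + (-1)*(ρ₀:ℂ)^2*ζ^3*w^4*(k:ℂ)^4 + (-1)*(ρ₀:ℂ)^2*ζ^3*w^4*(k:ℂ)^5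 + (-1)*(ρ₀:ℂ)^2*ζ^4*w^3*(k:ℂ)^4 + (-1)*(ρ₀:ℂ)^2*ζ^4*w^3*(k:ℂ)^5 + (ρ₀:ℂ)^4*ζ*(k:ℂ)^4 + (ρ₀:ℂ)^4*ζ*(k:ℂ)^5 + (ρ₀:ℂ)^4*ζ^2*w*(k:ℂ)^4 + (ρ₀:ℂ)^4*ζ^2*w*(k:ℂ)^5 + (ρ₀:ℂ)^4*ζ^3*w^2*(k:ℂ)^4 + (ρ₀:ℂ)^4*ζ^3*w^2*(k:ℂ)^5 + (-2)*(ρ₀:ℂ)^4*A*ζ*(k:ℂ)^4 + (-2)*(ρ₀:ℂ)^4*A*ζ^2*w*(k:ℂ)^4 + (-2)*(ρ₀:ℂ)^4*A*ζ^3*w^2*(k:ℂ)^4 + (ρ₀:ℂ)^4*A^2*ζ*(k:ℂ)^4 + (-1)*(ρ₀:ℂ)^4*A^2*ζ*(k:ℂ)^5 + (ρ₀:ℂ)^4*A^2*ζ^2*w*(k:ℂ)^4 + (-1)*(ρ₀:ℂ)^4*A^2*ζ^2*w*(k:ℂ)^5 + (ρ₀:ℂ)^4*A^2*ζ^3*w^2*(k:ℂ)^4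 + (-1)*(ρ₀:ℂ)^4*A^2*ζ^3*w^2*(k:ℂ)^5) * hw + ((ρ₀:ℂ)^2*ζ*(k:ℂ)^4) * hkeyC
end

section
/- Set ρ = ρ₀ := √((k+1)/((1 − a^k)·(k·a^k + k − a^k + 1))). Let j be an integer and ζ = exp(2πi·j/k). Then there exists r₀ > 0 such that for every real r with 0 < r < r₀, (2πi)⁻¹ times the contour integral of the function z ↦ i·(1/G(z) + G(z))·f(z) over the circle of radius r centered at ζ (traversed once counterclockwise) equals 2·(k+1)·sin(2πj/k)/(ρ₀·k²). In particular this residue is real, so there is no x₂-period around ζ. -/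
open Complex Metric Finset

set_option maxHeartbeats 2000000 in
/-- With `ρ = ρ₀ = √((k+1)/((1-a^k)(k a^k + k - a^k + 1)))` and
`ζ = exp(2πi j/k)`, for all sufficiently small radii `r` the residue of
`i (1/G + G)·dh` at `ζ`, computed as `(2πi)⁻¹` times the contour integral over the
circle of radius `r` centered at `ζ`, equals `2 (k+1) sin(2πj/k)/(ρ₀ k²)`;
in particular it is real, so there is no `x₂`-period around `ζ`. -/
theorem stmt_9 (k : ℕ) (hk : 2 ≤ k) (a ρ₀ : ℝ) (ha0 : 0 < a) (ha1 : a < 1)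
    (hρ₀ : ρ₀ = Real.sqrt (((k : ℝ) + 1) /
      ((1 - a ^ k) * ((k : ℝ) * a ^ k + (k : ℝ) - a ^ k + 1))))
    (G f : ℂ → ℂ)
    (hG : ∀ z : ℂ, G z = (ρ₀ : ℂ) * z * (z ^ k - (a : ℂ) ^ k))
    (hf : ∀ z : ℂ, f z = ((a : ℂ) ^ k - z ^ k) / (z * (z ^ k - 1) ^ 2))
    (j : ℤ) (ζ : ℂ)
    (hζ : ζ = Complex.exp (2 * Real.pi * Complex.I * (j : ℂ) / (k : ℂ))) :
    ∃ r₀ > 0, ∀ r : ℝ, 0 < r → r < r₀ →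
      (2 * Real.pi * Complex.I)⁻¹ *
          (∮ z in C(ζ, r), Complex.I * (1 / G z + G z) * f z) =
        ((2 * ((k : ℝ) + 1) * Real.sin (2 * Real.pi * (j : ℝ) / (k : ℝ)) /
          (ρ₀ * (k : ℝ) ^ 2) : ℝ) : ℂ) := by
  obtain ⟨m, rfl⟩ : ∃ m, k = m + 2 := ⟨k - 2, by omega⟩
  clear hk
  -- ## Real preliminaries
  have hak1 : a ^ (m + 2) < 1 := pow_lt_one₀ ha0.le ha1 (by omega)
  have hakpos : 0 < a ^ (m + 2) := pow_pos ha0 _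
  push_cast at hρ₀
  have hMpos : (0:ℝ) < (m:ℝ) + 2 := by positivity
  have hBpos : 0 < ((m:ℝ) + 2) * a ^ (m+2) + ((m:ℝ) + 2) - a ^ (m+2) + 1 := by nlinarith
  have h1a : 0 < 1 - a ^ (m+2) := by linarith
  have hρpos : 0 < ρ₀ := by
    rw [hρ₀]
    exact Real.sqrt_pos.mpr (div_pos (by positivity) (mul_pos h1a hBpos))
  have hρsqR : ρ₀ ^ 2 * ((1 - a ^ (m+2)) * (((m:ℝ)+2) * a ^ (m+2) + ((m:ℝ)+2) - a ^ (m+2) + 1))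
      = (m:ℝ) + 2 + 1 := by
    rw [hρ₀, Real.sq_sqrt (le_of_lt (div_pos (by positivity) (mul_pos h1a hBpos)))]
    field_simp
    apply div_self; intro h; nlinarith
  -- ## Complex preliminaries
  set ρ : ℂ := ((ρ₀ : ℝ) : ℂ) with hρdef
  have hρ0 : ρ ≠ 0 := by rw [hρdef]; exact Complex.ofReal_ne_zero.mpr hρpos.ne'
  set b : ℂ := (a : ℂ) ^ (m+2) with hbdef
  have hb1 : (1:ℂ) - b ≠ 0 := by
    rw [hbdef, ← Complex.ofReal_pow, ← Complex.ofReal_one, ← Complex.ofReal_sub]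
    exact_mod_cast h1a.ne'
  have hρc : ρ ^ 2 * ((1 - b) * (((m:ℂ)+2) * b + ((m:ℂ)+2) - b + 1)) = (m:ℂ) + 2 + 1 := by
    rw [hρdef, hbdef, ← Complex.ofReal_pow, ← Complex.ofReal_pow]
    exact_mod_cast congrArg (Complex.ofReal) hρsqR
  set θ : ℝ := 2 * Real.pi * (j:ℝ) / ((m:ℝ) + 2) with hθdef
  have hm2 : ((m:ℂ) + 2) ≠ 0 := by
    intro h
    have : ((m:ℝ) + 2) = 0 := by exact_mod_cast congrArg Complex.re h
    linarith
  have hζθ : ζ = Complex.exp ((θ:ℝ) * Complex.I) := by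
    rw [hζ, hθdef]
    congr 1
    push_cast
    field_simp
  have hζ0 : ζ ≠ 0 := by rw [hζθ]; exact Complex.exp_ne_zero _
  have hζk : ζ ^ (m+2) = 1 := by
    rw [hζ, ← Complex.exp_nat_mul]
    have : ((m+2:ℕ):ℂ) * (2 * Real.pi * Complex.I * (j : ℂ) / ((m+2:ℕ) : ℂ))
        = (j:ℂ) * (2 * Real.pi * Complex.I) := by
      push_cast
      field_simp
    rw [this, Complex.exp_int_mul_two_pi_mul_I]
  have hs2 : ζ ^ 2 - 1 = 2 * (Real.sin θ : ℂ) * Complex.I * ζ := by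
    have h1 : ζ = Complex.cos θ + Complex.sin θ * Complex.I := by
      rw [hζθ, Complex.exp_mul_I]
    have h2 : Complex.sin θ ^ 2 + Complex.cos θ ^ 2 = 1 := Complex.sin_sq_add_cos_sq θ
    rw [Complex.ofReal_sin]
    rw [h1]
    linear_combination h2 - Complex.sin (θ:ℂ) ^ 2 * Complex.I_sq
  -- ## the polynomial q with q z * (z - ζ) = z^(m+2) - 1
  set q : ℂ → ℂ := fun z => ∑ i ∈ Finset.range (m+2), z ^ i * ζ ^ (m + 1 - i) with hqdef
  have hqmul : ∀ z : ℂ, q z * (z - ζ) = z ^ (m+2) - 1 := by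
    intro z
    have h := geom_sum₂_mul z ζ (m+2)
    rw [hζk] at h
    simpa using h
  have hqζ : q ζ = ((m:ℂ) + 2) * ζ ^ (m+1) := by
    have h : ∀ i ∈ Finset.range (m+2), ζ ^ i * ζ ^ (m + 1 - i) = ζ ^ (m+1) := by
      intro i hi
      rw [← pow_add]
      congr 1
      have := Finset.mem_range.mp hi
      omega
    simp only [hqdef]
    rw [Finset.sum_congr rfl h, Finset.sum_const, Finset.card_range, nsmul_eq_mul]
    push_cast; ring
  have hqd : HasDerivAt q (((m:ℂ)+2) * ((m:ℂ)+1) / 2 * ζ ^ m) ζ := by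
    have h1 : HasDerivAt q (∑ i ∈ Finset.range (m+2), ((i:ℂ) * ζ ^ (i-1)) * ζ ^ (m+1-i)) ζ := by
      simp only [hqdef]
      exact HasDerivAt.fun_sum fun i _ => (hasDerivAt_pow i ζ).mul_const _
    convert h1 using 1
    have h2 : ∀ i ∈ Finset.range (m+2), ((i:ℂ) * ζ ^ (i-1)) * ζ ^ (m+1-i) = (i:ℂ) * ζ ^ m := by
      intro i hi
      rcases Nat.eq_zero_or_pos i with h | h
      · subst h; simp
      · rw [mul_assoc, ← pow_add]
        congr 2
        have := Finset.mem_range.mp hi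
        omega
    rw [Finset.sum_congr rfl h2, ← Finset.sum_mul]
    have h4 : (∑ i ∈ Finset.range (m+2), i) * 2 = (m+2) * (m+1) := by
      simpa using Finset.sum_range_id_mul_two (m+2)
    have h3 := congrArg (Nat.cast : ℕ → ℂ) h4
    push_cast at h3
    linear_combination (-(ζ ^ m)/2) * h3
  -- ## A and P
  set A : ℂ → ℂ := fun z => -Complex.I / ρ - Complex.I * ρ * (z ^ 2 * (z ^ (m+2) - b) ^ 2) with hAdef
  set P : ℂ → ℂ := fun z => A z / (z ^ 2 * q z ^ 2) with hPdef
  have hpow : HasDerivAt (fun z : ℂ => z ^ (m+2)) (((m:ℂ)+2) * ζ ^ (m+1)) ζ := by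
    have := hasDerivAt_pow (m+2) ζ
    simpa using this
  have hAd : HasDerivAt A
      (-(Complex.I * ρ * (2 * ζ * (1-b)^2 + 2 * ((m:ℂ)+2) * (1-b) * ζ ^ (m+3)))) ζ := by
    have h1 : HasDerivAt (fun z : ℂ => z ^ 2 * (z ^ (m+2) - b) ^ 2)
        ((2 * ζ) * (ζ ^ (m+2) - b) ^ 2
          + ζ ^ 2 * (2 * (ζ ^ (m+2) - b) ^ 1 * (((m:ℂ)+2) * ζ ^ (m+1)))) ζ := by
      have := ((hasDerivAt_pow 2 ζ).mul ((hpow.sub_const b).pow 2))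
      exact this.congr_deriv (by simp)
    have h2 := ((h1.const_mul (Complex.I * ρ)).const_sub (-Complex.I / ρ))
    have h3 : HasDerivAt A (-(Complex.I * ρ *
        ((2 * ζ) * (ζ ^ (m+2) - b) ^ 2
          + ζ ^ 2 * (2 * (ζ ^ (m+2) - b) ^ 1 * (((m:ℂ)+2) * ζ ^ (m+1)))))) ζ := by
      simp only [hAdef]
      convert h2 using 2 with z
    rw [hζk] at h3
    convert h3 using 1
    ring
  have hDζ : ζ ^ 2 * q ζ ^ 2 ≠ 0 := by
    rw [hqζ]
    exact mul_ne_zero (pow_ne_zero _ hζ0)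
      (pow_ne_zero _ (mul_ne_zero hm2 (pow_ne_zero _ hζ0)))
  have hDd : HasDerivAt (fun z => z ^ 2 * q z ^ 2)
      (2 * ζ * q ζ ^ 2 + ζ ^ 2 * (2 * q ζ * (((m:ℂ)+2) * ((m:ℂ)+1) / 2 * ζ ^ m))) ζ := by
    have := (hasDerivAt_pow 2 ζ).mul (hqd.pow 2)
    exact this.congr_deriv (by simp)
  have hPd := hAd.div hDd hDζ
  -- ## neighborhood and differentiability
  have hqcont : Continuous q := by
    simp only [hqdef]
    exact continuous_finset_sum _ fun i _ => (continuous_pow i).mul continuous_const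
  set U : Set ℂ := {z | z * q z * (z ^ (m+2) - b) ≠ 0} with hUdef
  have hUopen : IsOpen U := by
    have hc : Continuous fun z : ℂ => z * q z * (z ^ (m+2) - b) :=
      (continuous_id.mul hqcont).mul ((continuous_pow _).sub continuous_const)
    exact isOpen_compl_singleton.preimage hc
  have hζU : ζ ∈ U := by
    simp only [hUdef, Set.mem_setOf_eq]
    rw [hqζ, hζk]
    exact mul_ne_zero (mul_ne_zero hζ0 (mul_ne_zero hm2 (pow_ne_zero _ hζ0))) hb1
  obtain ⟨r₁, hr₁pos, hr₁sub⟩ := Metric.isOpen_iff.mp hUopen ζ hζU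
  refine ⟨r₁, hr₁pos, fun r hr hrlt => ?_⟩
  have hball : closedBall ζ r ⊆ U := (closedBall_subset_ball hrlt).trans hr₁sub
  have hqdiff : Differentiable ℂ q := by
    simp only [hqdef]
    exact Differentiable.fun_sum fun i _ => (differentiable_pow i).mul_const _
  have hAdiff : Differentiable ℂ A := by
    simp only [hAdef]
    exact (differentiable_const _).sub ((differentiable_const _).mul
      ((differentiable_pow 2).mul (((differentiable_pow (m+2)).sub_const b).pow 2)))
  have hPdiff : DifferentiableOn ℂ P U := by
    simp only [hPdef]
    apply DifferentiableOn.div hAdiff.differentiableOn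
      (((differentiable_pow 2).mul (hqdiff.pow 2)).differentiableOn)
    intro z hz
    simp only [hUdef, Set.mem_setOf_eq] at hz
    have hz0 : z ≠ 0 := fun h => hz (by simp [h])
    have hqz : q z ≠ 0 := fun h => hz (by simp [h])
    exact mul_ne_zero (pow_ne_zero _ hz0) (pow_ne_zero _ hqz)
  -- ## the integrand equals ((z-ζ)^2)⁻¹ • P z on the circle
  have heq : Set.EqOn (fun z => Complex.I * (1 / G z + G z) * f z)
      (fun z => ((z - ζ) ^ 2)⁻¹ • P z) (sphere ζ r) := by
    intro z hz
    have hzU : z ∈ U := hball (sphere_subset_closedBall hz)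
    simp only [hUdef, Set.mem_setOf_eq] at hzU
    have hz0 : z ≠ 0 := fun h => hzU (by simp [h])
    have hqz : q z ≠ 0 := fun h => hzU (by simp [h])
    have hzb : z ^ (m+2) - b ≠ 0 := fun h => hzU (by rw [h]; ring)
    have hzζ : z ≠ ζ := by
      intro h
      rw [mem_sphere] at hz
      rw [h, dist_self] at hz
      exact hr.ne hz
    have hsub : z - ζ ≠ 0 := sub_ne_zero.mpr hzζ
    have hfac : z ^ (m+2) - 1 = q z * (z - ζ) := (hqmul z).symm
    simp only [hG, hf, hPdef, hAdef, smul_eq_mul]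
    rw [hfac]
    field_simp [hρ0, hz0, hqz, hzb, hsub]
    ring
  have hcauchy := Complex.two_pi_I_inv_smul_circleIntegral_sub_sq_inv_smul_of_differentiable
    hUopen hball hPdiff (mem_ball_self hr)
  rw [circleIntegral.integral_congr hr.le heq, ← smul_eq_mul, hcauchy, (show HasDerivAt P _ ζ from hPd).deriv]
  -- ## final algebra
  have hzm : ζ ^ m = (ζ ^ 2)⁻¹ := by
    apply eq_inv_of_mul_eq_one_left
    rw [← pow_add]
    exact hζk
  push_cast
  simp only [hAdef]
  rw [hζk, hqζ, pow_add ζ m 3, pow_succ ζ m, hzm]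
  push_cast [hθdef] at hs2
  rw [← hρdef]
  set S : ℂ := Complex.sin (2 * (Real.pi:ℂ) * (j:ℂ) / ((m:ℂ) + 2)) with hSdef
  have hkey : Complex.I * (1 - ζ^2) = 2 * S * ζ := by
    linear_combination (-Complex.I) * hs2 + (-2*S*ζ) * Complex.I_sq
  rw [show (ζ^2)⁻¹ * ζ^3 = ζ from by (field_simp [hζ0]; try ring)]
  rw [show (ζ^2)⁻¹ * ζ = ζ⁻¹ from by (field_simp [hζ0]; try ring)]
  rw [show ζ^2*(((m:ℂ)+2)*ζ⁻¹)^2 = ((m:ℂ)+2)^2 from by (field_simp [hζ0]; try ring)]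
  rw [show 2*ζ*(((m:ℂ)+2)*ζ⁻¹)^2 + ζ^2*(2*(((m:ℂ)+2)*ζ⁻¹)*(((m:ℂ)+2)*((m:ℂ)+1)/2*(ζ^2)⁻¹))
      = ((m:ℂ)+2)^2*((m:ℂ)+3)*ζ⁻¹ from by (field_simp [hζ0]; try ring)]
  have hρc' := hρc
  rw [hbdef] at hρc'
  field_simp [hζ0, hρ0, hm2]
  linear_combination (-Complex.I * ζ^2) * hρc
    + ((m:ℂ)+3) * hkey
end

section
/- For every real number r with 0 < r < 1 and r ≠ a, the contour integral of the function z ↦ (1/G(z))·f(z) over the circle of radius r centered at 0 (traversed once counterclockwise) equals 0; i.e., the residue of (1/G)·dh at z = 0 vanishes. -/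
open Complex Metric

/-- For every radius `0 < r < 1` with `r ≠ a`, the contour integral of `(1/G)·f`
over the circle of radius `r` centered at `0` vanishes: the residue of `(1/G)·dh`
at `z = 0` is zero. Here `G(z) = ρ z (z^k - a^k)` and
`f(z) = (a^k - z^k)/(z (z^k - 1)^2)`. -/
theorem stmt_10 (k : ℕ) (hk : 2 ≤ k) (a ρ : ℝ) (ha0 : 0 < a) (ha1 : a < 1)
    (hρ : 0 < ρ)
    (G f : ℂ → ℂ)
    (hG : ∀ z : ℂ, G z = (ρ : ℂ) * z * (z ^ k - (a : ℂ) ^ k))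
    (hf : ∀ z : ℂ, f z = ((a : ℂ) ^ k - z ^ k) / (z * (z ^ k - 1) ^ 2))
    (r : ℝ) (hr0 : 0 < r) (hr1 : r < 1) (hra : r ≠ a) :
    (∮ z in C(0, r), (1 / G z) * f z) = 0 := by
  set F : ℂ → ℂ := fun z => -((ρ : ℂ)⁻¹ * ((z ^ k - 1) ^ 2)⁻¹) with hF
  have hρ0 : (ρ : ℂ) ≠ 0 := by
    exact_mod_cast hρ.ne'
  have hne1 : ∀ z : ℂ, z ∈ ball (0 : ℂ) 1 → z ^ k - 1 ≠ 0 := by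
    intro z hz h
    have hz1 : ‖z‖ < 1 := by simpa using hz
    have : ‖z ^ k‖ < 1 := by
      rw [norm_pow]
      exact pow_lt_one₀ (norm_nonneg _) hz1 (by omega)
    rw [sub_eq_zero] at h
    rw [h] at this
    simp at this
  -- F is differentiable on the unit ball
  have hFd : DifferentiableOn ℂ F (ball (0 : ℂ) 1) := by
    apply DifferentiableOn.neg
    apply DifferentiableOn.const_mul
    apply DifferentiableOn.inv
    · exact ((differentiable_pow k).sub_const 1).differentiableOn.pow 2
    · intro z hz
      exact pow_ne_zero 2 (hne1 z hz)
  -- derivative of F at 0 is 0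
  have hFderiv : HasDerivAt F 0 0 := by
    have h1 : HasDerivAt (fun z : ℂ => z ^ k - 1) 0 0 := by
      have := (hasDerivAt_pow k (0 : ℂ)).sub_const 1
      refine this.congr_deriv ?_
      rw [zero_pow (by omega : k - 1 ≠ 0)]
      ring
    have h2 : HasDerivAt (fun z : ℂ => (z ^ k - 1) ^ 2) 0 0 := by
      have := h1.pow 2
      exact this.congr_deriv (by simp)
    have h3 : HasDerivAt (fun z : ℂ => ((z ^ k - 1) ^ 2)⁻¹) 0 0 := by
      have := h2.inv (by simp [zero_pow (by omega : k ≠ 0)] : ((0:ℂ) ^ k - 1) ^ 2 ≠ 0)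
      exact this.congr_deriv (by simp)
    have := (h3.const_mul ((ρ : ℂ)⁻¹)).neg
    exact this.congr_deriv (by simp)
  -- Cauchy formula for the derivative
  have hsub : closedBall (0 : ℂ) r ⊆ ball (0 : ℂ) 1 := by
    intro z hz
    simp only [mem_closedBall, mem_ball] at *
    calc dist z 0 ≤ r := hz
      _ < 1 := hr1
  have hmem : (0 : ℂ) ∈ ball (0 : ℂ) r := mem_ball_self hr0
  have key := Complex.two_pi_I_inv_smul_circleIntegral_sub_sq_inv_smul_of_differentiable
    isOpen_ball hsub hFd hmem
  rw [hFderiv.deriv] at key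
  -- the integrand equals ((z - 0)^2)⁻¹ • F z on the sphere
  have hcong : ∀ z ∈ sphere (0 : ℂ) r, (1 / G z) * f z = ((z - 0) ^ 2)⁻¹ • F z := by
    intro z hz
    have hzn : ‖z‖ = r := by simpa using hz
    have hz0 : z ≠ 0 := by
      intro h; rw [h] at hzn; simp at hzn; exact hr0.ne' hzn.symm
    have hzk1 : z ^ k - 1 ≠ 0 := hne1 z (by simp [mem_ball, hzn, hr1, dist_eq_norm])
    have hzka : z ^ k - (a : ℂ) ^ k ≠ 0 := by
      intro h
      rw [sub_eq_zero] at h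
      have : ‖z ^ k‖ = ‖((a : ℂ)) ^ k‖ := by rw [h]
      rw [norm_pow, norm_pow, hzn] at this
      simp only [Complex.norm_real, Real.norm_eq_abs, abs_of_pos ha0] at this
      rcases lt_trichotomy r a with h' | h' | h'
      · exact absurd this (ne_of_lt (pow_lt_pow_left₀ h' hr0.le (by omega)))
      · exact hra h'
      · exact absurd this.symm (ne_of_lt (pow_lt_pow_left₀ h' ha0.le (by omega)))
    rw [hG, hf, hF]
    simp only [smul_eq_mul, sub_zero]
    field_simp
    ring
  rw [circleIntegral.integral_congr (le_of_lt hr0) hcong]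
  have : (2 * Real.pi * I : ℂ) ≠ 0 := by
    simp [Real.pi_ne_zero, Complex.I_ne_zero]
  calc (∮ z in C(0, r), ((z - 0) ^ 2)⁻¹ • F z)
      = (2 * Real.pi * I : ℂ) • ((2 * Real.pi * I : ℂ)⁻¹ • ∮ z in C(0, r), ((z - 0) ^ 2)⁻¹ • F z) := by
        rw [smul_inv_smul₀ this]
    _ = 0 := by rw [key]; simp
end

section
/- For every real number R with R > 1, the contour integrals of the functions z ↦ (1/G(z))·f(z) and z ↦ G(z)·f(z) over the circle of radius R centered at 0 (traversed once counterclockwise) both equal 0; i.e., the residues of (1/G)·dh and of G·dh at z = ∞ vanish. -/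
open Real Filter Metric

lemma circleIntegral_eq_zero_of_decay (h : ℂ → ℂ) (R : ℝ) (hR : 1 < R)
    (hd : ∀ z : ℂ, 1 < ‖z‖ → DifferentiableAt ℂ h z)
    (b : ℝ → ℝ)
    (hbd : ∀ᶠ S in atTop, ∀ z : ℂ, ‖z‖ = S → ‖h z‖ ≤ b S)
    (hb : Tendsto (fun S => 2 * π * S * b S) atTop (nhds 0)) :
    (∮ z in C(0, R), h z) = 0 := by
  have key : ∀ S, R ≤ S → (∮ z in C(0, R), h z) = ∮ z in C(0, S), h z := by
    intro S hS
    refine (Complex.circleIntegral_eq_of_differentiable_on_annulus_off_countable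
      (c := 0) (by linarith : (0:ℝ) < R) hS Set.countable_empty ?_ ?_).symm
    · intro z hz
      have h1 : 1 < ‖z‖ := by
        simp only [Set.mem_diff, Metric.mem_closedBall, Metric.mem_ball, dist_zero_right,
          not_lt] at hz
        linarith [hz.2]
      exact ((hd z h1).continuousAt).continuousWithinAt
    · intro z hz
      have h1 : 1 < ‖z‖ := by
        have := hz.1.2
        simp only [Metric.mem_closedBall, dist_zero_right, not_le] at this
        linarith
      exact hd z h1
  have hnorm : ∀ᶠ S in atTop, ‖∮ z in C(0, R), h z‖ ≤ 2 * π * S * b S := by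
    filter_upwards [hbd, eventually_ge_atTop R] with S hSb hSR
    rw [key S hSR]
    have h0S : 0 ≤ S := by linarith
    have := circleIntegral.norm_integral_le_of_norm_le_const (c := (0:ℂ)) (R := S)
      (f := h) (C := b S) h0S (fun z hz => hSb z (by simpa [dist_zero_right] using hz))
    simpa [abs_of_nonneg h0S] using this
  have hle : ‖∮ z in C(0, R), h z‖ ≤ 0 := ge_of_tendsto hb hnorm
  simpa using norm_le_zero_iff.mp hle

/-- For every `R > 1`, the contour integrals of `(1/G)·f` and of `G·f` over the
circle of radius `R` centered at `0` both vanish: the residues of `(1/G)·dh` and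
`G·dh` at `z = ∞` are zero. Here `G(z) = ρ z (z^k - a^k)` and
`f(z) = (a^k - z^k)/(z (z^k - 1)^2)`. -/
theorem stmt_11 (k : ℕ) (hk : 2 ≤ k) (a ρ : ℝ) (ha0 : 0 < a) (ha1 : a < 1)
    (hρ : 0 < ρ)
    (G f : ℂ → ℂ)
    (hG : ∀ z : ℂ, G z = (ρ : ℂ) * z * (z ^ k - (a : ℂ) ^ k))
    (hf : ∀ z : ℂ, f z = ((a : ℂ) ^ k - z ^ k) / (z * (z ^ k - 1) ^ 2))
    (R : ℝ) (hR : 1 < R) :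
    (∮ z in C(0, R), (1 / G z) * f z) = 0 ∧
    (∮ z in C(0, R), G z * f z) = 0 := by
  have hρ0 : (ρ : ℂ) ≠ 0 := by exact_mod_cast hρ.ne'
  have hak : a ^ k < 1 := pow_lt_one₀ ha0.le ha1 (by omega)
  have hak0 : 0 < a ^ k := pow_pos ha0 k
  -- basic nonvanishing facts for `1 < ‖z‖`
  have facts : ∀ z : ℂ, 1 < ‖z‖ →
      z ≠ 0 ∧ z ^ k - 1 ≠ 0 ∧ z ^ k - (a : ℂ) ^ k ≠ 0 := by
    intro z hz
    have h1k : 1 < ‖z‖ ^ k := one_lt_pow₀ hz (by omega)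
    refine ⟨fun h => by simp [h] at hz; linarith, ?_, ?_⟩
    · intro h
      have h1 : ‖z ^ k‖ = 1 := by rw [sub_eq_zero.mp h]; simp
      rw [norm_pow] at h1; linarith
    · intro h
      have h1 : ‖z ^ k‖ = a ^ k := by
        rw [sub_eq_zero.mp h]
        simp [norm_pow, abs_of_pos ha0]
      rw [norm_pow] at h1; linarith
  constructor
  · -- first integral
    have hcong : Set.EqOn (fun z => (1 / G z) * f z)
        (fun z : ℂ => -(((ρ:ℂ) * z ^ 2 * (z ^ k - 1) ^ 2)⁻¹)) (sphere (0:ℂ) R) := by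
      intro z hz
      have hzR : ‖z‖ = R := by simpa [dist_zero_right] using hz
      obtain ⟨hz0, hz1, hza⟩ := facts z (by rw [hzR]; exact hR)
      simp only [hG, hf]
      field_simp
      ring
    rw [circleIntegral.integral_congr (by linarith) hcong]
    refine circleIntegral_eq_zero_of_decay _ R hR ?_ (fun S => 4 / (ρ * S ^ (2*k+2))) ?_ ?_
    · intro z hz
      obtain ⟨hz0, hz1, hza⟩ := facts z hz
      have hden : ((ρ:ℂ) * z ^ 2 * (z ^ k - 1) ^ 2) ≠ 0 :=
        mul_ne_zero (mul_ne_zero hρ0 (pow_ne_zero _ hz0)) (pow_ne_zero _ hz1)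
      have hdiff : DifferentiableAt ℂ (fun z : ℂ => (ρ:ℂ) * z ^ 2 * (z ^ k - 1) ^ 2) z := by
        fun_prop
      exact (hdiff.inv hden).neg
    · filter_upwards [eventually_ge_atTop 2] with S hS2 z hzS
      have hS1 : (1:ℝ) < S := by linarith
      have hSk : (2:ℝ) ≤ S ^ k := le_trans hS2 (le_self_pow₀ (by linarith) (by omega))
      have ht : S ^ k / 2 ≤ ‖z ^ k - 1‖ := by
        have := norm_sub_norm_le (z ^ k) (1:ℂ)
        simp only [norm_pow, norm_one, hzS] at this
        linarith
      have htpos : (0:ℝ) < ‖z ^ k - 1‖ := lt_of_lt_of_le (by positivity) ht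
      have hnorm : ‖-(((ρ:ℂ) * z ^ 2 * (z ^ k - 1) ^ 2)⁻¹)‖
          = 1 / (ρ * S ^ 2 * ‖z ^ k - 1‖ ^ 2) := by
        rw [norm_neg, norm_inv, one_div]
        congr 1
        simp [norm_mul, norm_pow, hzS, abs_of_pos hρ]
      rw [hnorm, div_le_div_iff₀ (by positivity) (by positivity)]
      have hpow : S ^ (2*k+2) = S ^ 2 * (S ^ k * S ^ k) := by ring
      have ht2 : (S ^ k / 2) ^ 2 ≤ ‖z ^ k - 1‖ ^ 2 := by
        apply pow_le_pow_left₀ (by positivity) ht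
      nlinarith [mul_le_mul_of_nonneg_left ht2 (by positivity : (0:ℝ) ≤ 4 * ρ * S ^ 2)]
    · have heq : (fun S : ℝ => 2 * π * S * (4 / (ρ * S ^ (2*k+2))))
          =ᶠ[atTop] fun S => (8 * π / ρ) / S ^ (2*k+1) := by
        filter_upwards [eventually_gt_atTop 0] with S hS
        have hSne : S ≠ 0 := hS.ne'
        field_simp
        ring
      exact Tendsto.congr' heq.symm
        (tendsto_const_nhds.div_atTop (tendsto_pow_atTop (by omega)))
  · -- second integral
    set r : ℂ → ℂ := fun z =>
      -(ρ:ℂ) * (1 - (a:ℂ) ^ k) * (2 * z ^ k - (a:ℂ) ^ k - 1) * ((z ^ k - 1) ^ 2)⁻¹ with hr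
    have hrd : ∀ z : ℂ, 1 < ‖z‖ → DifferentiableAt ℂ r z := by
      intro z hz
      obtain ⟨hz0, hz1, hza⟩ := facts z hz
      have h1 : DifferentiableAt ℂ (fun z : ℂ => (z ^ k - 1) ^ 2) z := by fun_prop
      have h2 : DifferentiableAt ℂ
          (fun z : ℂ => -(ρ:ℂ) * (1 - (a:ℂ) ^ k) * (2 * z ^ k - (a:ℂ) ^ k - 1)) z := by fun_prop
      exact h2.mul (h1.inv (pow_ne_zero _ hz1))
    have hcong : Set.EqOn (fun z => G z * f z) (fun z : ℂ => r z - (ρ:ℂ)) (sphere (0:ℂ) R) := by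
      intro z hz
      have hzR : ‖z‖ = R := by simpa [dist_zero_right] using hz
      obtain ⟨hz0, hz1, hza⟩ := facts z (by rw [hzR]; exact hR)
      simp only [hG, hf, hr]
      field_simp
      ring
    rw [circleIntegral.integral_congr (by linarith) hcong]
    have hint1 : CircleIntegrable r 0 R := by
      refine ContinuousOn.circleIntegrable (by linarith) ?_
      intro z hz
      have hzR : ‖z‖ = R := by simpa [dist_zero_right] using hz
      exact ((hrd z (by rw [hzR]; exact hR)).continuousAt).continuousWithinAt
    have hint2 : CircleIntegrable (fun _ : ℂ => (ρ:ℂ)) 0 R := circleIntegrable_const _ _ _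
    rw [circleIntegral.integral_sub hint1 hint2]
    have hconst : (∮ _ in C(0, R), (ρ:ℂ)) = 0 := by
      refine circleIntegral.integral_eq_zero_of_hasDerivWithinAt (f := fun z => (ρ:ℂ) * z)
        (by linarith) (fun z _ => ?_)
      simpa using ((hasDerivAt_id z).const_mul (ρ:ℂ)).hasDerivWithinAt
    rw [hconst, sub_zero]
    refine circleIntegral_eq_zero_of_decay _ R hR hrd (fun S => 12 * ρ / S ^ k) ?_ ?_
    · filter_upwards [eventually_ge_atTop 2] with S hS2 z hzS
      have hS1 : (1:ℝ) < S := by linarith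
      have hSk : (2:ℝ) ≤ S ^ k := le_trans hS2 (le_self_pow₀ (by linarith) (by omega))
      have ht : S ^ k / 2 ≤ ‖z ^ k - 1‖ := by
        have := norm_sub_norm_le (z ^ k) (1:ℂ)
        simp only [norm_pow, norm_one, hzS] at this
        linarith
      have htpos : (0:ℝ) < ‖z ^ k - 1‖ := lt_of_lt_of_le (by positivity) ht
      have hnum : ‖2 * z ^ k - (a:ℂ) ^ k - 1‖ ≤ 3 * S ^ k := by
        calc ‖2 * z ^ k - (a:ℂ) ^ k - 1‖
            ≤ ‖2 * z ^ k - (a:ℂ) ^ k‖ + ‖(1:ℂ)‖ := norm_sub_le _ _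
          _ ≤ ‖2 * z ^ k‖ + ‖(a:ℂ) ^ k‖ + ‖(1:ℂ)‖ := by
              have := norm_sub_le (2 * z ^ k) ((a:ℂ) ^ k); linarith
          _ = 2 * S ^ k + a ^ k + 1 := by
              simp [norm_mul, norm_pow, hzS, abs_of_pos ha0]
          _ ≤ 3 * S ^ k := by nlinarith
      have hfac : ‖(1:ℂ) - (a:ℂ) ^ k‖ = 1 - a ^ k := by
        have : (1:ℂ) - (a:ℂ) ^ k = ((1 - a ^ k : ℝ) : ℂ) := by push_cast; ring
        rw [this, Complex.norm_real, Real.norm_eq_abs, abs_of_pos (by linarith)]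
      have hnorm : ‖r z‖ = ρ * (1 - a ^ k) * ‖2 * z ^ k - (a:ℂ) ^ k - 1‖ / ‖z ^ k - 1‖ ^ 2 := by
        rw [hr]
        simp only [norm_mul, norm_inv, norm_neg, norm_pow, Complex.norm_real,
          Real.norm_eq_abs, abs_of_pos hρ, hfac, div_eq_mul_inv]
      rw [hnorm, div_le_div_iff₀ (by positivity) (by positivity)]
      have ht2 : (S ^ k / 2) ^ 2 ≤ ‖z ^ k - 1‖ ^ 2 := pow_le_pow_left₀ (by positivity) ht 2
      have hfle : 1 - a ^ k ≤ 1 := by nlinarith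
      have hfnn : (0:ℝ) ≤ 1 - a ^ k := by linarith
      have hnn : (0:ℝ) ≤ ‖2 * z ^ k - (a:ℂ) ^ k - 1‖ := norm_nonneg _
      have hSkpos : (0:ℝ) < S ^ k := by positivity
      nlinarith [mul_le_mul_of_nonneg_left ht2 (by positivity : (0:ℝ) ≤ 12 * ρ),
        mul_le_mul_of_nonneg_left hnum (mul_nonneg (mul_nonneg hρ.le hfnn) hSkpos.le),
        mul_le_mul_of_nonneg_right hfle (by positivity : (0:ℝ) ≤ ρ * (3 * S ^ k) * S ^ k)]
    · obtain ⟨m, hm⟩ : ∃ m, k = m + 1 := ⟨k - 1, by omega⟩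
      have heq : (fun S : ℝ => 2 * π * S * (12 * ρ / S ^ k))
          =ᶠ[atTop] fun S => (24 * π * ρ) / S ^ m := by
        filter_upwards [eventually_gt_atTop 0] with S hS
        have hSne : S ≠ 0 := hS.ne'
        rw [hm, pow_succ]
        field_simp
        ring
      exact Tendsto.congr' heq.symm
        (tendsto_const_nhds.div_atTop (tendsto_pow_atTop (by omega)))
end

section
/- Let a := ((−1 − b^{2+4k} + (b^{2k} + b^{2+2k})·(2k+1) + (1 − b^{2k})·√D)/(b^k·(k − 1 + b^{2+2k}·(k−1) + (b² + b^{2k})·(k+1))))^{1/k} with D = k² + b²·(1 − b^{2k})²·(2k+1) + k²·b²·(1 + b^{4k} + b^{2+4k}), and assume a^k ≠ b^k and a^k·b^k ≠ 1. Then there exists r₀ > 0 such that for every real r with 0 < r < r₀, the contour integral of the function z ↦ (1/G(z) + G(z))·f(z) over the circle of radius r centered at b (traversed once counterclockwise) equals 0; i.e., the residue of (1/G + G)·dh at z = b vanishes. -/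
open Metric Set

set_option maxHeartbeats 4000000 in
set_option maxRecDepth 16000 in
/-- With the parameter `a` given by the explicit formula solving the period
equation (and assuming `a^k ≠ b^k`, `a^k b^k ≠ 1`), for all sufficiently small
radii `r` the contour integral of `(1/G + G)·f` over the circle of radius `r`
centered at `b` vanishes: the residue of `(1/G + G)·dh` at `z = b` is zero.
Here `G(z) = z^{k+1}(z^k - a^k)/(a^k z^k - 1)` and
`f(z) = b^{2k} z^{k-1} (z^k - a^k)(a^k z^k - 1)/(a^k (z^k - b^k)² (b^k z^k - 1)²)`. -/
theorem stmt_17 (k : ℕ) (hk : 2 ≤ k) (b : ℝ) (hb0 : 0 < b) (hb1 : b < 1)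
    (D a : ℝ)
    (hD : D = (k : ℝ) ^ 2 + b ^ 2 * (1 - b ^ (2 * k)) ^ 2 * (2 * (k : ℝ) + 1)
      + (k : ℝ) ^ 2 * b ^ 2 * (1 + b ^ (4 * k) + b ^ (2 + 4 * k)))
    (ha : a = ((-1 - b ^ (2 + 4 * k) + (b ^ (2 * k) + b ^ (2 + 2 * k)) * (2 * (k : ℝ) + 1)
        + (1 - b ^ (2 * k)) * Real.sqrt D) /
        (b ^ k * ((k : ℝ) - 1 + b ^ (2 + 2 * k) * ((k : ℝ) - 1)
          + (b ^ 2 + b ^ (2 * k)) * ((k : ℝ) + 1)))) ^ (1 / (k : ℝ)))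
    (hab : a ^ k ≠ b ^ k) (hab1 : a ^ k * b ^ k ≠ 1)
    (G f : ℂ → ℂ)
    (hG : ∀ z : ℂ, G z = z ^ (k + 1) * (z ^ k - (a : ℂ) ^ k) /
      ((a : ℂ) ^ k * z ^ k - 1))
    (hf : ∀ z : ℂ, f z = (b : ℂ) ^ (2 * k) * z ^ (k - 1) * (z ^ k - (a : ℂ) ^ k) *
      ((a : ℂ) ^ k * z ^ k - 1) /
      ((a : ℂ) ^ k * (z ^ k - (b : ℂ) ^ k) ^ 2 * ((b : ℂ) ^ k * z ^ k - 1) ^ 2)) :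
    ∃ r₀ > 0, ∀ r : ℝ, 0 < r → r < r₀ →
      (∮ z in C((b : ℂ), r), (1 / G z + G z) * f z) = 0 := by
  obtain ⟨m, rfl⟩ : ∃ m, k = m + 2 := ⟨k - 2, by omega⟩
  clear hk
  -- ## Real algebra: `a ^ (m+2) = N / M`
  have hD0 : (0:ℝ) ≤ D := by
    rw [hD]; positivity
  have hs2 : Real.sqrt D ^ 2 = ((m+2:ℕ) : ℝ) ^ 2
      + b ^ 2 * (1 - b ^ (2 * (m+2))) ^ 2 * (2 * ((m+2:ℕ) : ℝ) + 1)
      + ((m+2:ℕ) : ℝ) ^ 2 * b ^ 2 * (1 + b ^ (4 * (m+2)) + b ^ (2 + 4 * (m+2))) := by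
    rw [Real.sq_sqrt hD0]; exact hD
  have hsge : ((m:ℝ) + 2) ≤ Real.sqrt D := by
    have h1 : ((m:ℝ) + 2) ^ 2 ≤ D := by
      have hX : (0:ℝ) ≤ b^2*(1-b^(2*(m+2)))^2*(2*((m:ℝ)+2)+1) := by positivity
      have hY : (0:ℝ) ≤ ((m:ℝ)+2)^2*b^2*(1+b^(4*(m+2))+b^(2+4*(m+2))) := by positivity
      rw [hD]; push_cast
      nlinarith [hX, hY]
    nlinarith [Real.sqrt_nonneg D, Real.sq_sqrt hD0]
  have hb2K : b ^ (2 * (m+2)) < 1 := by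
    apply pow_lt_one₀ hb0.le hb1 (by omega)
  have hMpos : 0 < b ^ (m+2) * (((m+2:ℕ):ℝ) - 1 + b ^ (2 + 2 * (m+2)) * (((m+2:ℕ):ℝ) - 1)
      + (b ^ 2 + b ^ (2 * (m+2))) * (((m+2:ℕ):ℝ) + 1)) := by
    apply mul_pos (pow_pos hb0 _)
    push_cast
    nlinarith [pow_pos hb0 (2 + 2*(m+2)), pow_pos hb0 2, pow_pos hb0 (2*(m+2)),
      Nat.cast_nonneg (α := ℝ) m, mul_nonneg (Nat.cast_nonneg (α := ℝ) m) (pow_pos hb0 (2 + 2*(m+2))).le]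
  have hNpos : 0 < -1 - b ^ (2 + 4 * (m+2)) + (b ^ (2 * (m+2)) + b ^ (2 + 2 * (m+2))) * (2 * ((m+2:ℕ):ℝ) + 1)
      + (1 - b ^ (2 * (m+2))) * Real.sqrt D := by
    have h1 : b ^ (2 + 4 * (m+2)) ≤ b ^ (2 + 2 * (m+2)) :=
      pow_le_pow_of_le_one hb0.le hb1.le (by omega)
    have h2 : (0:ℝ) ≤ 1 - b ^ (2 * (m+2)) := by linarith
    have h3 : (1 - b ^ (2 * (m+2))) * ((m:ℝ) + 2) ≤ (1 - b ^ (2 * (m+2))) * Real.sqrt D :=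
      mul_le_mul_of_nonneg_left hsge h2
    have h4 : (0:ℝ) ≤ b ^ (2 * (m+2)) := by positivity
    have h5 : (0:ℝ) ≤ b ^ (2 + 2 * (m+2)) := by positivity
    have h6 : (0:ℝ) ≤ (m:ℝ) := Nat.cast_nonneg m
    push_cast
    nlinarith [mul_nonneg h4 h6, mul_nonneg h5 h6, mul_nonneg h2 h6]
  have hK0 : ((m+2:ℕ):ℝ) ≠ 0 := by
    exact_mod_cast (by omega : m + 2 ≠ 0)
  have hx : (0:ℝ) ≤ (-1 - b ^ (2 + 4 * (m+2)) + (b ^ (2 * (m+2)) + b ^ (2 + 2 * (m+2))) * (2 * ((m+2:ℕ):ℝ) + 1)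
      + (1 - b ^ (2 * (m+2))) * Real.sqrt D) /
      (b ^ (m+2) * (((m+2:ℕ):ℝ) - 1 + b ^ (2 + 2 * (m+2)) * (((m+2:ℕ):ℝ) - 1)
        + (b ^ 2 + b ^ (2 * (m+2))) * (((m+2:ℕ):ℝ) + 1))) := (div_pos hNpos hMpos).le
  have hA : a ^ (m+2) = (-1 - b ^ (2 + 4 * (m+2)) + (b ^ (2 * (m+2)) + b ^ (2 + 2 * (m+2))) * (2 * ((m+2:ℕ):ℝ) + 1)
      + (1 - b ^ (2 * (m+2))) * Real.sqrt D) /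
      (b ^ (m+2) * (((m+2:ℕ):ℝ) - 1 + b ^ (2 + 2 * (m+2)) * (((m+2:ℕ):ℝ) - 1)
        + (b ^ 2 + b ^ (2 * (m+2))) * (((m+2:ℕ):ℝ) + 1))) := by
    rw [ha, ← Real.rpow_natCast (((-1 - b ^ (2 + 4 * (m+2)) + (b ^ (2 * (m+2)) + b ^ (2 + 2 * (m+2))) * (2 * ((m+2:ℕ):ℝ) + 1)
      + (1 - b ^ (2 * (m+2))) * Real.sqrt D) /
      (b ^ (m+2) * (((m+2:ℕ):ℝ) - 1 + b ^ (2 + 2 * (m+2)) * (((m+2:ℕ):ℝ) - 1)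
        + (b ^ 2 + b ^ (2 * (m+2))) * (((m+2:ℕ):ℝ) + 1)))) ^ (1 / ((m+2:ℕ):ℝ))) (m+2),
      ← Real.rpow_mul hx, one_div, inv_mul_cancel₀ hK0, Real.rpow_one]
  have hAM : a ^ (m+2) * (b ^ (m+2) * (((m+2:ℕ):ℝ) - 1 + b ^ (2 + 2 * (m+2)) * (((m+2:ℕ):ℝ) - 1)
      + (b ^ 2 + b ^ (2 * (m+2))) * (((m+2:ℕ):ℝ) + 1)))
      = -1 - b ^ (2 + 4 * (m+2)) + (b ^ (2 * (m+2)) + b ^ (2 + 2 * (m+2))) * (2 * ((m+2:ℕ):ℝ) + 1)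
      + (1 - b ^ (2 * (m+2))) * Real.sqrt D := by
    rw [hA, div_mul_cancel₀ _ hMpos.ne']
  have hapos : 0 < a := by
    rw [ha]; exact Real.rpow_pos_of_pos (div_pos hNpos hMpos) _
  -- ## complex versions
  have hAMc : ((a:ℝ):ℂ) ^ (m+2) * (((b:ℝ):ℂ) ^ (m+2) * (((m+2:ℕ):ℂ) - 1 + ((b:ℝ):ℂ) ^ (2 + 2 * (m+2)) * (((m+2:ℕ):ℂ) - 1)
      + (((b:ℝ):ℂ) ^ 2 + ((b:ℝ):ℂ) ^ (2 * (m+2))) * (((m+2:ℕ):ℂ) + 1)))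
      = -1 - ((b:ℝ):ℂ) ^ (2 + 4 * (m+2)) + (((b:ℝ):ℂ) ^ (2 * (m+2)) + ((b:ℝ):ℂ) ^ (2 + 2 * (m+2))) * (2 * ((m+2:ℕ):ℂ) + 1)
      + (1 - ((b:ℝ):ℂ) ^ (2 * (m+2))) * ((Real.sqrt D : ℝ) : ℂ) := by
    exact_mod_cast hAM
  have hsc : ((Real.sqrt D : ℝ) : ℂ) ^ 2 = ((m+2:ℕ) : ℂ) ^ 2
      + ((b:ℝ):ℂ) ^ 2 * (1 - ((b:ℝ):ℂ) ^ (2 * (m+2))) ^ 2 * (2 * ((m+2:ℕ) : ℂ) + 1)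
      + ((m+2:ℕ) : ℂ) ^ 2 * ((b:ℝ):ℂ) ^ 2 * (1 + ((b:ℝ):ℂ) ^ (4 * (m+2)) + ((b:ℝ):ℂ) ^ (2 + 4 * (m+2))) := by
    exact_mod_cast hs2
  push_cast at hAMc hsc
  -- ## the polynomial `q` with `q z * (z - b) = z^(m+2) - b^(m+2)`
  set q : ℂ → ℂ := fun z => ∑ i ∈ Finset.range (m+2), z ^ i * ((b:ℝ):ℂ) ^ (m+1-i) with hqdef
  have hqfac : ∀ z : ℂ, q z * (z - ((b:ℝ):ℂ)) = z ^ (m+2) - ((b:ℝ):ℂ) ^ (m+2) := by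
    intro z
    exact geom_sum₂_mul z ((b:ℝ):ℂ) (m+2)
  have hqb : q ((b:ℝ):ℂ) = ((m+2:ℕ):ℂ) * ((b:ℝ):ℂ) ^ (m+1) := by
    rw [hqdef]
    beta_reduce
    have hcong : ∀ i ∈ Finset.range (m+2), ((b:ℝ):ℂ) ^ i * ((b:ℝ):ℂ) ^ (m+1-i) = ((b:ℝ):ℂ) ^ (m+1) := by
      intro i hi
      rw [Finset.mem_range] at hi
      rw [← pow_add]
      congr 1
      omega
    rw [Finset.sum_congr rfl hcong, Finset.sum_const, Finset.card_range, nsmul_eq_mul]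
  have hqcont : Continuous q := by
    rw [hqdef]
    exact continuous_finset_sum _ fun i _ => (continuous_pow i).mul continuous_const
  have hqdiff : Differentiable ℂ q := by
    rw [hqdef]
    exact Differentiable.fun_sum fun i _ => (differentiable_pow i).mul_const _
  -- derivative of q at b
  set Sv : ℂ := ∑ i ∈ Finset.range (m+2), (i:ℂ) * ((b:ℝ):ℂ) ^ (i-1) * ((b:ℝ):ℂ) ^ (m+1-i) with hSvdef
  have hqD : HasDerivAt q Sv ((b:ℝ):ℂ) := by
    rw [hqdef, hSvdef]
    exact HasDerivAt.fun_sum fun i _ => (hasDerivAt_pow i _).mul_const _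
  have hS2 : Sv * 2 = ((m:ℂ) + 1) * ((m:ℂ) + 2) * ((b:ℝ):ℂ) ^ m := by
    have h1 : Sv = (∑ i ∈ Finset.range (m+2), (i:ℂ)) * ((b:ℝ):ℂ) ^ m := by
      rw [hSvdef, Finset.sum_mul]
      apply Finset.sum_congr rfl
      intro i hi
      rw [Finset.mem_range] at hi
      match i with
      | 0 => simp
      | (j+1) =>
        rw [mul_assoc, ← pow_add, show (j+1-1) + (m+1-(j+1)) = m from by omega]
    have h3 := Finset.sum_range_id_mul_two (m+2)
    have h4 := congrArg (Nat.cast : ℕ → ℂ) h3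
    rw [show m+2-1 = m+1 from rfl] at h4
    push_cast at h4
    rw [h1]
    linear_combination (((b:ℝ):ℂ) ^ m) * h4
  -- ## nonvanishing at b
  have hb0c : ((b:ℝ):ℂ) ≠ 0 := by exact_mod_cast hb0.ne'
  have hAcne : ((a:ℝ):ℂ) ^ (m+2) ≠ 0 := pow_ne_zero _ (by exact_mod_cast hapos.ne')
  have hqbne : q ((b:ℝ):ℂ) ≠ 0 := by
    rw [hqb]
    exact mul_ne_zero (Nat.cast_ne_zero.2 (by omega)) (pow_ne_zero _ hb0c)
  have hBBne : ((b:ℝ):ℂ) ^ (m+2) * ((b:ℝ):ℂ) ^ (m+2) - 1 ≠ 0 := by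
    have hr : b ^ (m+2) * b ^ (m+2) ≠ 1 := by
      have : b ^ (m+2) * b ^ (m+2) < 1 := by
        have := pow_lt_one₀ hb0.le hb1 (show m+2 ≠ 0 by omega)
        nlinarith [pow_pos hb0 (m+2)]
      exact this.ne
    intro h
    rw [sub_eq_zero] at h
    exact hr (by exact_mod_cast h)
  have hABne : ((a:ℝ):ℂ) ^ (m+2) * ((b:ℝ):ℂ) ^ (m+2) - 1 ≠ 0 := by
    intro h
    rw [sub_eq_zero] at h
    exact hab1 (by exact_mod_cast h)
  have hbAne : ((b:ℝ):ℂ) ^ (m+2) - ((a:ℝ):ℂ) ^ (m+2) ≠ 0 := by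
    intro h
    rw [sub_eq_zero] at h
    exact hab (by exact_mod_cast h.symm)
  -- ## the function g = num/den
  set num : ℂ → ℂ := fun z => ((b:ℝ):ℂ) ^ (2*m+4) * ((((a:ℝ):ℂ) ^ (m+2) * z ^ (m+2) - 1) ^ 2
      + z ^ (2*m+6) * (z ^ (m+2) - ((a:ℝ):ℂ) ^ (m+2)) ^ 2) with hnumdef
  set den : ℂ → ℂ := fun z => ((a:ℝ):ℂ) ^ (m+2) * z ^ 2 * (q z) ^ 2
      * (((b:ℝ):ℂ) ^ (m+2) * z ^ (m+2) - 1) ^ 2 with hdendef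
  set g : ℂ → ℂ := fun z => num z / den z with hgdef
  have hnumdiff : Differentiable ℂ num := by
    rw [hnumdef]
    exact ((((differentiable_pow _).const_mul _).sub_const _).pow 2).add
      ((differentiable_pow _).mul (((differentiable_pow _).sub_const _).pow 2)) |>.const_mul _
  have hdendiff : Differentiable ℂ den := by
    rw [hdendef]
    exact (((differentiable_pow 2).const_mul _).mul (hqdiff.pow 2)).mul
      ((((differentiable_pow _).const_mul _).sub_const _).pow 2)
  -- ## derivative of g at b is zero
  have hp1 : HasDerivAt (fun z : ℂ => z ^ (m+2)) (((m+2:ℕ):ℂ) * ((b:ℝ):ℂ) ^ (m+1)) ((b:ℝ):ℂ) := by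
    have h := hasDerivAt_pow (m+2) ((b:ℝ):ℂ)
    rwa [show m+2-1 = m+1 from rfl] at h
  have hp2 : HasDerivAt (fun z : ℂ => z ^ (2*m+6)) (((2*m+6:ℕ):ℂ) * ((b:ℝ):ℂ) ^ (2*m+5)) ((b:ℝ):ℂ) := by
    have h := hasDerivAt_pow (2*m+6) ((b:ℝ):ℂ)
    rwa [show 2*m+6-1 = 2*m+5 from by omega] at h
  have hT1 : HasDerivAt (fun z : ℂ => ((a:ℝ):ℂ) ^ (m+2) * z ^ (m+2) - 1)
      (((a:ℝ):ℂ) ^ (m+2) * (((m+2:ℕ):ℂ) * ((b:ℝ):ℂ) ^ (m+1))) ((b:ℝ):ℂ) :=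
    (hp1.const_mul _).sub_const _
  have hT2 : HasDerivAt (fun z : ℂ => z ^ (m+2) - ((a:ℝ):ℂ) ^ (m+2))
      (((m+2:ℕ):ℂ) * ((b:ℝ):ℂ) ^ (m+1)) ((b:ℝ):ℂ) := hp1.sub_const _
  have hnumD : HasDerivAt num (((b:ℝ):ℂ) ^ (2*m+4) * (((2:ℕ):ℂ) * (((a:ℝ):ℂ) ^ (m+2) * ((b:ℝ):ℂ) ^ (m+2) - 1) ^ (2-1) * (((a:ℝ):ℂ) ^ (m+2) * (((m+2:ℕ):ℂ) * ((b:ℝ):ℂ) ^ (m+1)))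
      + (((2*m+6:ℕ):ℂ) * ((b:ℝ):ℂ) ^ (2*m+5) * (((b:ℝ):ℂ) ^ (m+2) - ((a:ℝ):ℂ) ^ (m+2)) ^ 2
        + ((b:ℝ):ℂ) ^ (2*m+6) * (((2:ℕ):ℂ) * (((b:ℝ):ℂ) ^ (m+2) - ((a:ℝ):ℂ) ^ (m+2)) ^ (2-1) * (((m+2:ℕ):ℂ) * ((b:ℝ):ℂ) ^ (m+1)))))) ((b:ℝ):ℂ) := by
    rw [hnumdef]
    exact ((hT1.pow 2).add (hp2.mul (hT2.pow 2))).const_mul (((b:ℝ):ℂ) ^ (2*m+4))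
  have hBz : HasDerivAt (fun z : ℂ => ((b:ℝ):ℂ) ^ (m+2) * z ^ (m+2) - 1)
      (((b:ℝ):ℂ) ^ (m+2) * (((m+2:ℕ):ℂ) * ((b:ℝ):ℂ) ^ (m+1))) ((b:ℝ):ℂ) :=
    (hp1.const_mul _).sub_const _
  have hp0 : HasDerivAt (fun z : ℂ => ((a:ℝ):ℂ) ^ (m+2) * z ^ 2)
      (((a:ℝ):ℂ) ^ (m+2) * (((2:ℕ):ℂ) * ((b:ℝ):ℂ) ^ 1)) ((b:ℝ):ℂ) :=
    (hasDerivAt_pow 2 _).const_mul _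
  have hdenD : HasDerivAt den ((((a:ℝ):ℂ) ^ (m+2) * (((2:ℕ):ℂ) * ((b:ℝ):ℂ) ^ 1) * q ((b:ℝ):ℂ) ^ 2
      + ((a:ℝ):ℂ) ^ (m+2) * ((b:ℝ):ℂ) ^ 2 * (((2:ℕ):ℂ) * q ((b:ℝ):ℂ) ^ (2-1) * Sv))
        * (((b:ℝ):ℂ) ^ (m+2) * ((b:ℝ):ℂ) ^ (m+2) - 1) ^ 2
      + ((a:ℝ):ℂ) ^ (m+2) * ((b:ℝ):ℂ) ^ 2 * q ((b:ℝ):ℂ) ^ 2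
        * (((2:ℕ):ℂ) * (((b:ℝ):ℂ) ^ (m+2) * ((b:ℝ):ℂ) ^ (m+2) - 1) ^ (2-1)
          * (((b:ℝ):ℂ) ^ (m+2) * (((m+2:ℕ):ℂ) * ((b:ℝ):ℂ) ^ (m+1))))) ((b:ℝ):ℂ) := by
    rw [hdendef]
    exact ((hp0.mul (hqD.pow 2)).mul (hBz.pow 2))
  have hdenbne : den ((b:ℝ):ℂ) ≠ 0 := by
    rw [hdendef]
    exact mul_ne_zero (mul_ne_zero (mul_ne_zero hAcne (pow_ne_zero 2 hb0c)) (pow_ne_zero 2 hqbne))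
      (pow_ne_zero 2 hBBne)
  have hgD := hnumD.div hdenD hdenbne
  have hMcne : ((b:ℝ):ℂ) ^ (m+2) * (((m:ℂ)+2) - 1 + ((b:ℝ):ℂ) ^ (2 + 2 * (m+2)) * (((m:ℂ)+2) - 1)
      + (((b:ℝ):ℂ) ^ 2 + ((b:ℝ):ℂ) ^ (2 * (m+2))) * (((m:ℂ)+2) + 1)) ≠ 0 := by
    have e1 : ((b:ℝ):ℂ) ^ (m+2) * (((m:ℂ)+2) - 1 + ((b:ℝ):ℂ) ^ (2 + 2 * (m+2)) * (((m:ℂ)+2) - 1)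
        + (((b:ℝ):ℂ) ^ 2 + ((b:ℝ):ℂ) ^ (2 * (m+2))) * (((m:ℂ)+2) + 1))
        = (((b ^ (m+2) * (((m+2:ℕ):ℝ) - 1 + b ^ (2 + 2 * (m+2)) * (((m+2:ℕ):ℝ) - 1)
        + (b ^ 2 + b ^ (2 * (m+2))) * (((m+2:ℕ):ℝ) + 1))) : ℝ) : ℂ) := by
      push_cast
      ring
    rw [e1]
    exact_mod_cast hMpos.ne'
  have hQM : (((-1 : ℂ) * ((b:ℝ):ℂ)^(6*m+11) * ((m:ℂ)+2)^2 + (1 : ℂ) * ((b:ℝ):ℂ)^(6*m+11) * ((m:ℂ)+2)^3 + (2 : ℂ) * ((b:ℝ):ℂ)^(8*m+15) * ((m:ℂ)+2)^2 + (-1 : ℂ) * ((b:ℝ):ℂ)^(10*m+19) * ((m:ℂ)+2)^2 + (-1 : ℂ) * ((b:ℝ):ℂ)^(10*m+19) * ((m:ℂ)+2)^3 + (1 : ℂ) * ((b:ℝ):ℂ)^(6*m+13) * ((m:ℂ)+2)^2 + (1 : ℂ) * ((b:ℝ):ℂ)^(6*m+13) * ((m:ℂ)+2)^3 + (-2 :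 ℂ) * ((b:ℝ):ℂ)^(8*m+17) * ((m:ℂ)+2)^2 + (1 : ℂ) * ((b:ℝ):ℂ)^(10*m+21) * ((m:ℂ)+2)^2 + (-1 : ℂ) * ((b:ℝ):ℂ)^(10*m+21) * ((m:ℂ)+2)^3) * (((a:ℝ):ℂ)^(m+2))^2 + ((2 : ℂ) * ((b:ℝ):ℂ)^(5*m+9) * ((m:ℂ)+2)^2 + (-4 : ℂ) * ((b:ℝ):ℂ)^(7*m+13) * ((m:ℂ)+2)^2 + (-4 : ℂ) * ((b:ℝ):ℂ)^(7*m+13) * ((m:ℂ)+2)^3 + (2 : ℂ) * ((b:ℝ):ℂ)^(9*m+17) * ((m:ℂ)+2)^2 + (4 : ℂ) * ((b:ℝ):ℂ)^(9*m+17) * ((m:ℂ)+2)^3 + (-2 : ℂ) * ((b:ℝ):ℂ)^(7*m+15) * ((m:ℂ)+2)^2 + (-4 : ℂ) * ((b:ℝ):ℂ)^(7*m+15) * ((m:ℂ)+2)^3 + (4 : ℂ) * ((b:ℝ):ℂ)^(9*m+19) * ((m:ℂ)+2)^2 + (4 : ℂ) * ((b:ℝ):ℂ)^(9*m+19) * ((m:ℂ)+2)^3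 + (-2 : ℂ) * ((b:ℝ):ℂ)^(11*m+23) * ((m:ℂ)+2)^2) * ((a:ℝ):ℂ)^(m+2) + ((-1 : ℂ) * ((b:ℝ):ℂ)^(4*m+7) * ((m:ℂ)+2)^2 + (-1 : ℂ) * ((b:ℝ):ℂ)^(4*m+7) * ((m:ℂ)+2)^3 + (2 : ℂ) * ((b:ℝ):ℂ)^(6*m+11) * ((m:ℂ)+2)^2 + (4 : ℂ) * ((b:ℝ):ℂ)^(6*m+11) * ((m:ℂ)+2)^3 + (-1 : ℂ) * ((b:ℝ):ℂ)^(8*m+15) * ((m:ℂ)+2)^2 + (-3 : ℂ) * ((b:ℝ):ℂ)^(8*m+15) * ((m:ℂ)+2)^3 + (1 : ℂ) * ((b:ℝ):ℂ)^(8*m+17) * ((m:ℂ)+2)^2 + (3 : ℂ) * ((b:ℝ):ℂ)^(8*m+17) * ((m:ℂ)+2)^3 + (-2 : ℂ) * ((b:ℝ):ℂ)^(10*m+21) * ((m:ℂ)+2)^2 + (-4 : ℂ) * ((b:ℝ):ℂ)^(10*m+21) * ((m:ℂ)+2)^3 + (1 : ℂ) * ((b:ℝ):ℂ)^(12*m+25)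 * ((m:ℂ)+2)^2 + (1 : ℂ) * ((b:ℝ):ℂ)^(12*m+25) * ((m:ℂ)+2)^3))
      * (((b:ℝ):ℂ) ^ (m+2) * (((m:ℂ)+2) - 1 + ((b:ℝ):ℂ) ^ (2 + 2 * (m+2)) * (((m:ℂ)+2) - 1)
      + (((b:ℝ):ℂ) ^ 2 + ((b:ℝ):ℂ) ^ (2 * (m+2))) * (((m:ℂ)+2) + 1))) ^ 2 = 0 := by
    linear_combination (((-1 : ℂ) * ((b:ℝ):ℂ)^(6*m+11) * ((m:ℂ)+2)^2 + (1 : ℂ) * ((b:ℝ):ℂ)^(6*m+11) * ((m:ℂ)+2)^3 + (2 : ℂ) * ((b:ℝ):ℂ)^(8*m+15) * ((m:ℂ)+2)^2 + (-1 : ℂ) * ((b:ℝ):ℂ)^(10*m+19) * ((m:ℂ)+2)^2 + (-1 : ℂ) * ((b:ℝ):ℂ)^(10*m+19) * ((m:ℂ)+2)^3 + (1 : ℂ) * ((b:ℝ):ℂ)^(6*m+13) * ((m:ℂ)+2)^2 + (1 : ℂ) * ((b:ℝ):ℂ)^(6*m+13) * ((m:ℂ)+2)^3 + (-2 : ℂ)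 * ((b:ℝ):ℂ)^(8*m+17) * ((m:ℂ)+2)^2 + (1 : ℂ) * ((b:ℝ):ℂ)^(10*m+21) * ((m:ℂ)+2)^2 + (-1 : ℂ) * ((b:ℝ):ℂ)^(10*m+21) * ((m:ℂ)+2)^3) * (((a:ℝ):ℂ)^(m+2) * (((b:ℝ):ℂ) ^ (m+2) * (((m:ℂ)+2) - 1
        + ((b:ℝ):ℂ) ^ (2 + 2 * (m+2)) * (((m:ℂ)+2) - 1)
        + (((b:ℝ):ℂ) ^ 2 + ((b:ℝ):ℂ) ^ (2 * (m+2))) * (((m:ℂ)+2) + 1)))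
        + (-1 - ((b:ℝ):ℂ) ^ (2 + 4 * (m+2)) + (((b:ℝ):ℂ) ^ (2 * (m+2)) + ((b:ℝ):ℂ) ^ (2 + 2 * (m+2))) * (2 * ((m:ℂ)+2) + 1)
        + (1 - ((b:ℝ):ℂ) ^ (2 * (m+2))) * ((Real.sqrt D : ℝ) : ℂ)))
        + ((2 : ℂ) * ((b:ℝ):ℂ)^(5*m+9) * ((m:ℂ)+2)^2 + (-4 : ℂ) * ((b:ℝ):ℂ)^(7*m+13) * ((m:ℂ)+2)^2 + (-4 : ℂ) * ((b:ℝ):ℂ)^(7*m+13) * ((m:ℂ)+2)^3 + (2 : ℂ) * ((b:ℝ):ℂ)^(9*m+17) * ((m:ℂ)+2)^2 + (4 : ℂ) * ((b:ℝ):ℂ)^(9*m+17) * ((m:ℂ)+2)^3 + (-2 : ℂ) * ((b:ℝ):ℂ)^(7*m+15) * ((m:ℂ)+2)^2 + (-4 : ℂ) * ((b:ℝ):ℂ)^(7*m+15) * ((m:ℂ)+2)^3 + (4 : ℂ) * ((b:ℝ):ℂ)^(9*m+19) * ((m:ℂ)+2)^2 + (4 : ℂ) * ((b:ℝ):ℂ)^(9*m+19)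 * ((m:ℂ)+2)^3 + (-2 : ℂ) * ((b:ℝ):ℂ)^(11*m+23) * ((m:ℂ)+2)^2) * (((b:ℝ):ℂ) ^ (m+2) * (((m:ℂ)+2) - 1
        + ((b:ℝ):ℂ) ^ (2 + 2 * (m+2)) * (((m:ℂ)+2) - 1)
        + (((b:ℝ):ℂ) ^ 2 + ((b:ℝ):ℂ) ^ (2 * (m+2))) * (((m:ℂ)+2) + 1)))) * hAMc
      + (((-1 : ℂ) * ((b:ℝ):ℂ)^(6*m+11) * ((m:ℂ)+2)^2 + (1 : ℂ) * ((b:ℝ):ℂ)^(6*m+11) * ((m:ℂ)+2)^3 + (4 : ℂ) * ((b:ℝ):ℂ)^(8*m+15) * ((m:ℂ)+2)^2 + (-2 : ℂ) * ((b:ℝ):ℂ)^(8*m+15) * ((m:ℂ)+2)^3 + (-6 : ℂ) * ((b:ℝ):ℂ)^(10*m+19) * ((m:ℂ)+2)^2 + (4 : ℂ) * ((b:ℝ):ℂ)^(12*m+23) * ((m:ℂ)+2)^2 + (2 : ℂ) * ((b:ℝ):ℂ)^(12*m+23) * ((m:ℂ)+2)^3 + (-1 : ℂ) * ((b:ℝ):ℂ)^(14*m+27)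 * ((m:ℂ)+2)^2 + (-1 : ℂ) * ((b:ℝ):ℂ)^(14*m+27) * ((m:ℂ)+2)^3 + (1 : ℂ) * ((b:ℝ):ℂ)^(6*m+13) * ((m:ℂ)+2)^2 + (1 : ℂ) * ((b:ℝ):ℂ)^(6*m+13) * ((m:ℂ)+2)^3 + (-4 : ℂ) * ((b:ℝ):ℂ)^(8*m+17) * ((m:ℂ)+2)^2 + (-2 : ℂ) * ((b:ℝ):ℂ)^(8*m+17) * ((m:ℂ)+2)^3 + (6 : ℂ) * ((b:ℝ):ℂ)^(10*m+21) * ((m:ℂ)+2)^2 + (-4 : ℂ) * ((b:ℝ):ℂ)^(12*m+25) * ((m:ℂ)+2)^2 + (2 : ℂ) * ((b:ℝ):ℂ)^(12*m+25) * ((m:ℂ)+2)^3 + (1 : ℂ) * ((b:ℝ):ℂ)^(14*m+29) * ((m:ℂ)+2)^2 + (-1 : ℂ) * ((b:ℝ):ℂ)^(14*m+29) * ((m:ℂ)+2)^3)) * hsc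
  have hQ : ((-1 : ℂ) * ((b:ℝ):ℂ)^(6*m+11) * ((m:ℂ)+2)^2 + (1 : ℂ) * ((b:ℝ):ℂ)^(6*m+11) * ((m:ℂ)+2)^3 + (2 : ℂ) * ((b:ℝ):ℂ)^(8*m+15) * ((m:ℂ)+2)^2 + (-1 : ℂ) * ((b:ℝ):ℂ)^(10*m+19) * ((m:ℂ)+2)^2 + (-1 : ℂ) * ((b:ℝ):ℂ)^(10*m+19) * ((m:ℂ)+2)^3 + (1 : ℂ) * ((b:ℝ):ℂ)^(6*m+13) * ((m:ℂ)+2)^2 + (1 : ℂ) * ((b:ℝ):ℂ)^(6*m+13) * ((m:ℂ)+2)^3 + (-2 : ℂ) * ((b:ℝ):ℂ)^(8*m+17) * ((m:ℂ)+2)^2 + (1 : ℂ) * ((b:ℝ):ℂ)^(10*m+21) * ((m:ℂ)+2)^2 + (-1 : ℂ) * ((b:ℝ):ℂ)^(10*m+21) * ((m:ℂ)+2)^3) * (((a:ℝ):ℂ)^(m+2))^2 + ((2 : ℂ) * ((b:ℝ):ℂ)^(5*m+9) * ((m:ℂ)+2)^2 + (-4 : ℂ) * ((b:ℝ):ℂ)^(7*m+13)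 * ((m:ℂ)+2)^2 + (-4 : ℂ) * ((b:ℝ):ℂ)^(7*m+13) * ((m:ℂ)+2)^3 + (2 : ℂ) * ((b:ℝ):ℂ)^(9*m+17) * ((m:ℂ)+2)^2 + (4 : ℂ) * ((b:ℝ):ℂ)^(9*m+17) * ((m:ℂ)+2)^3 + (-2 : ℂ) * ((b:ℝ):ℂ)^(7*m+15) * ((m:ℂ)+2)^2 + (-4 : ℂ) * ((b:ℝ):ℂ)^(7*m+15) * ((m:ℂ)+2)^3 + (4 : ℂ) * ((b:ℝ):ℂ)^(9*m+19) * ((m:ℂ)+2)^2 + (4 : ℂ) * ((b:ℝ):ℂ)^(9*m+19) * ((m:ℂ)+2)^3 + (-2 : ℂ) * ((b:ℝ):ℂ)^(11*m+23) * ((m:ℂ)+2)^2) * ((a:ℝ):ℂ)^(m+2) + ((-1 : ℂ) * ((b:ℝ):ℂ)^(4*m+7) * ((m:ℂ)+2)^2 + (-1 : ℂ) * ((b:ℝ):ℂ)^(4*m+7) * ((m:ℂ)+2)^3 + (2 : ℂ) * ((b:ℝ):ℂ)^(6*m+11) * ((m:ℂ)+2)^2 + (4 : ℂ) * ((b:ℝ):ℂ)^(6*m+11)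 * ((m:ℂ)+2)^3 + (-1 : ℂ) * ((b:ℝ):ℂ)^(8*m+15) * ((m:ℂ)+2)^2 + (-3 : ℂ) * ((b:ℝ):ℂ)^(8*m+15) * ((m:ℂ)+2)^3 + (1 : ℂ) * ((b:ℝ):ℂ)^(8*m+17) * ((m:ℂ)+2)^2 + (3 : ℂ) * ((b:ℝ):ℂ)^(8*m+17) * ((m:ℂ)+2)^3 + (-2 : ℂ) * ((b:ℝ):ℂ)^(10*m+21) * ((m:ℂ)+2)^2 + (-4 : ℂ) * ((b:ℝ):ℂ)^(10*m+21) * ((m:ℂ)+2)^3 + (1 : ℂ) * ((b:ℝ):ℂ)^(12*m+25) * ((m:ℂ)+2)^2 + (1 : ℂ) * ((b:ℝ):ℂ)^(12*m+25) * ((m:ℂ)+2)^3) = 0 :=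
    (mul_eq_zero.mp hQM).resolve_right (pow_ne_zero 2 hMcne)
  have hderiv0 : deriv g ((b:ℝ):ℂ) = 0 := by
    rw [show g = num / den from rfl, hgD.deriv]
    rw [div_eq_zero_iff]
    left
    rw [hnumdef, hdendef]
    beta_reduce
    rw [hqb]
    push_cast
    linear_combination (((a:ℝ):ℂ)^(1*m+2)) * hQ + (((-1 : ℂ) * ((a:ℝ):ℂ)^(1*m+2) * ((b:ℝ):ℂ)^(3*m+7) * ((m:ℂ)+2) + (2 : ℂ) * ((a:ℝ):ℂ)^(1*m+2) * ((b:ℝ):ℂ)^(5*m+11) * ((m:ℂ)+2) + (-1 : ℂ) * ((a:ℝ):ℂ)^(1*m+2) * ((b:ℝ):ℂ)^(7*m+15) * ((m:ℂ)+2) + (-1 : ℂ) * ((a:ℝ):ℂ)^(1*m+2) * ((b:ℝ):ℂ)^(7*m+17) * ((m:ℂ)+2) + (2 : ℂ) * ((a:ℝ):ℂ)^(1*m+2) * ((b:ℝ):ℂ)^(9*m+21) * ((m:ℂ)+2) + (-1 : ℂ) * ((a:ℝ):ℂ)^(1*m+2) * ((b:ℝ):ℂ)^(11*m+25) * ((m:ℂ)+2)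 + (2 : ℂ) * ((a:ℝ):ℂ)^(2*m+4) * ((b:ℝ):ℂ)^(4*m+9) * ((m:ℂ)+2) + (-4 : ℂ) * ((a:ℝ):ℂ)^(2*m+4) * ((b:ℝ):ℂ)^(6*m+13) * ((m:ℂ)+2) + (2 : ℂ) * ((a:ℝ):ℂ)^(2*m+4) * ((b:ℝ):ℂ)^(8*m+17) * ((m:ℂ)+2) + (2 : ℂ) * ((a:ℝ):ℂ)^(2*m+4) * ((b:ℝ):ℂ)^(6*m+15) * ((m:ℂ)+2) + (-4 : ℂ) * ((a:ℝ):ℂ)^(2*m+4) * ((b:ℝ):ℂ)^(8*m+19) * ((m:ℂ)+2) + (2 : ℂ) * ((a:ℝ):ℂ)^(2*m+4) * ((b:ℝ):ℂ)^(10*m+23) * ((m:ℂ)+2) + (-1 : ℂ) * ((a:ℝ):ℂ)^(3*m+6) * ((b:ℝ):ℂ)^(5*m+11) * ((m:ℂ)+2) + (2 : ℂ) * ((a:ℝ):ℂ)^(3*m+6) * ((b:ℝ):ℂ)^(7*m+15) * ((m:ℂ)+2) + (-1 : ℂ) * ((a:ℝ):ℂ)^(3*m+6) * ((b:ℝ):ℂ)^(9*m+19)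 * ((m:ℂ)+2) + (-1 : ℂ) * ((a:ℝ):ℂ)^(3*m+6) * ((b:ℝ):ℂ)^(5*m+13) * ((m:ℂ)+2) + (2 : ℂ) * ((a:ℝ):ℂ)^(3*m+6) * ((b:ℝ):ℂ)^(7*m+17) * ((m:ℂ)+2) + (-1 : ℂ) * ((a:ℝ):ℂ)^(3*m+6) * ((b:ℝ):ℂ)^(9*m+21) * ((m:ℂ)+2))) * hS2
  -- ## choice of r₀
  have hwcont : Continuous (fun z : ℂ => z * q z * (((b:ℝ):ℂ) ^ (m+2) * z ^ (m+2) - 1)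
      * (((a:ℝ):ℂ) ^ (m+2) * z ^ (m+2) - 1) * (z ^ (m+2) - ((a:ℝ):ℂ) ^ (m+2))) := by
    refine ((((continuous_id.mul hqcont).mul ?_).mul ?_).mul ?_)
    · exact (continuous_const.mul (continuous_pow _)).sub continuous_const
    · exact (continuous_const.mul (continuous_pow _)).sub continuous_const
    · exact (continuous_pow _).sub continuous_const
  have hwb : ((b:ℝ):ℂ) * q ((b:ℝ):ℂ) * (((b:ℝ):ℂ) ^ (m+2) * ((b:ℝ):ℂ) ^ (m+2) - 1)
      * (((a:ℝ):ℂ) ^ (m+2) * ((b:ℝ):ℂ) ^ (m+2) - 1) * (((b:ℝ):ℂ) ^ (m+2) - ((a:ℝ):ℂ) ^ (m+2)) ≠ 0 :=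
    mul_ne_zero (mul_ne_zero (mul_ne_zero (mul_ne_zero hb0c hqbne) hBBne) hABne) hbAne
  have hUopen : IsOpen {z : ℂ | z * q z * (((b:ℝ):ℂ) ^ (m+2) * z ^ (m+2) - 1)
      * (((a:ℝ):ℂ) ^ (m+2) * z ^ (m+2) - 1) * (z ^ (m+2) - ((a:ℝ):ℂ) ^ (m+2)) ≠ 0} :=
    isOpen_compl_singleton.preimage hwcont
  obtain ⟨ε, hε, hball⟩ := Metric.isOpen_iff.1 hUopen ((b:ℝ):ℂ) hwb
  have hfacts : ∀ z ∈ Metric.ball ((b:ℝ):ℂ) ε, z ≠ 0 ∧ q z ≠ 0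
      ∧ ((b:ℝ):ℂ) ^ (m+2) * z ^ (m+2) - 1 ≠ 0
      ∧ ((a:ℝ):ℂ) ^ (m+2) * z ^ (m+2) - 1 ≠ 0
      ∧ z ^ (m+2) - ((a:ℝ):ℂ) ^ (m+2) ≠ 0 := by
    intro z hz
    have hw := hball hz
    simp only [Set.mem_setOf_eq] at hw
    refine ⟨?_, ?_, ?_, ?_, ?_⟩ <;> intro h <;> apply hw <;> rw [h] <;> ring
  have hdenne : ∀ z ∈ Metric.ball ((b:ℝ):ℂ) ε, den z ≠ 0 := by
    intro z hz
    obtain ⟨h1, h2, h3, _, _⟩ := hfacts z hz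
    rw [hdendef]
    exact mul_ne_zero (mul_ne_zero (mul_ne_zero hAcne (pow_ne_zero 2 h1)) (pow_ne_zero 2 h2))
      (pow_ne_zero 2 h3)
  have hgdiff : DifferentiableOn ℂ g (Metric.ball ((b:ℝ):ℂ) ε) := by
    rw [hgdef]
    exact DifferentiableOn.div hnumdiff.differentiableOn hdendiff.differentiableOn hdenne
  have hganal : AnalyticOnNhd ℂ g (Metric.ball ((b:ℝ):ℂ) ε) :=
    hgdiff.analyticOnNhd isOpen_ball
  have hgdOn : DifferentiableOn ℂ (deriv g) (Metric.ball ((b:ℝ):ℂ) ε) :=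
    hganal.deriv.differentiableOn
  -- ## the integrals
  refine ⟨ε, hε, ?_⟩
  intro r hr hrε
  have hsub : Metric.closedBall ((b:ℝ):ℂ) r ⊆ Metric.ball ((b:ℝ):ℂ) ε := fun z hz =>
    Metric.mem_ball.2 (lt_of_le_of_lt (Metric.mem_closedBall.1 hz) hrε)
  have hsph : Metric.sphere ((b:ℝ):ℂ) r ⊆ Metric.ball ((b:ℝ):ℂ) ε :=
    Metric.sphere_subset_closedBall.trans hsub
  have hzbne : ∀ z ∈ Metric.sphere ((b:ℝ):ℂ) r, z - ((b:ℝ):ℂ) ≠ 0 := fun z hz =>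
    sub_ne_zero.2 (ne_of_mem_sphere hz hr.ne')
  -- step 1: rewrite the integrand
  have heq : Set.EqOn (fun z => (1 / G z + G z) * f z)
      (fun z => g z / (z - ((b:ℝ):ℂ)) ^ 2) (Metric.sphere ((b:ℝ):ℂ) r) := by
    intro z hz
    beta_reduce
    obtain ⟨h1, h2, h3, h4, h5⟩ := hfacts z (hsph hz)
    have h6 := hzbne z hz
    have hfz := hf z
    rw [← hqfac z] at hfz
    rw [hG z, hfz, hgdef, hnumdef, hdendef]
    simp only []
    rw [show m+2-1 = m+1 from rfl]
    rw [one_div, inv_div, div_add_div _ _ (mul_ne_zero (pow_ne_zero _ h1) h5) h4,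
      div_mul_div_comm]
    conv_rhs => rw [div_div]
    rw [div_eq_div_iff
      (mul_ne_zero (mul_ne_zero (mul_ne_zero (pow_ne_zero _ h1) h5) h4)
        (mul_ne_zero (mul_ne_zero hAcne (pow_ne_zero _ (mul_ne_zero h2 h6))) (pow_ne_zero _ h3)))
      (mul_ne_zero (mul_ne_zero (mul_ne_zero (mul_ne_zero hAcne (pow_ne_zero _ h1)) (pow_ne_zero _ h2))
        (pow_ne_zero _ h3)) (pow_ne_zero _ h6))]
    ring
  rw [circleIntegral.integral_congr hr.le heq]
  -- continuity facts on the sphere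
  have hgcont : ContinuousOn g (Metric.sphere ((b:ℝ):ℂ) r) := (hgdiff.continuousOn).mono hsph
  have hdgcont : ContinuousOn (deriv g) (Metric.sphere ((b:ℝ):ℂ) r) := (hgdOn.continuousOn).mono hsph
  have hsubcont : ContinuousOn (fun z : ℂ => z - ((b:ℝ):ℂ)) (Metric.sphere ((b:ℝ):ℂ) r) :=
    continuousOn_id.sub continuousOn_const
  have hinvcont : ContinuousOn (fun z : ℂ => (z - ((b:ℝ):ℂ))⁻¹) (Metric.sphere ((b:ℝ):ℂ) r) :=
    hsubcont.inv₀ hzbne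
  have hinv2cont : ContinuousOn (fun z : ℂ => ((z - ((b:ℝ):ℂ)) ^ 2)⁻¹) (Metric.sphere ((b:ℝ):ℂ) r) :=
    (hsubcont.pow 2).inv₀ fun z hz => pow_ne_zero 2 (hzbne z hz)
  have hf1int : CircleIntegrable (fun z => g z / (z - ((b:ℝ):ℂ)) ^ 2) ((b:ℝ):ℂ) r :=
    ContinuousOn.circleIntegrable hr.le (by
      exact (hgcont.mul hinv2cont).congr fun z _ => by simp [div_eq_mul_inv])
  have hFdint : CircleIntegrable (fun z => -(deriv g z) * (z - ((b:ℝ):ℂ))⁻¹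
      + g z * ((z - ((b:ℝ):ℂ)) ^ 2)⁻¹) ((b:ℝ):ℂ) r :=
    ContinuousOn.circleIntegrable hr.le ((hdgcont.neg.mul hinvcont).add (hgcont.mul hinv2cont))
  -- step 2: split
  have hsplit := circleIntegral.integral_sub hf1int hFdint
  have heq2 : Set.EqOn (fun z => (fun z => g z / (z - ((b:ℝ):ℂ)) ^ 2) z
        - (fun z => -(deriv g z) * (z - ((b:ℝ):ℂ))⁻¹ + g z * ((z - ((b:ℝ):ℂ)) ^ 2)⁻¹) z)
      (fun z => (z - ((b:ℝ):ℂ))⁻¹ • deriv g z) (Metric.sphere ((b:ℝ):ℂ) r) := by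
    intro z hz
    simp only [smul_eq_mul]
    have h6 := hzbne z hz
    field_simp
    ring
  have hcau := (hgdOn.mono hsub).circleIntegral_sub_inv_smul (Metric.mem_ball_self hr)
  -- step 3: the exact part integrates to zero
  have hFd0 : (∮ z in C(((b:ℝ):ℂ), r), (-(deriv g z) * (z - ((b:ℝ):ℂ))⁻¹
      + g z * ((z - ((b:ℝ):ℂ)) ^ 2)⁻¹)) = 0 := by
    apply circleIntegral.integral_eq_zero_of_hasDerivWithinAt hr.le
      (f := fun w => -(g w) * (w - ((b:ℝ):ℂ))⁻¹)
    intro z hz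
    have h6 := hzbne z hz
    have h1 : HasDerivAt g (deriv g z) z :=
      (hgdiff.differentiableAt (isOpen_ball.mem_nhds (hsph hz))).hasDerivAt
    have h2 : HasDerivAt (fun w : ℂ => w - ((b:ℝ):ℂ)) 1 z := (hasDerivAt_id z).sub_const _
    have h3 := h2.inv h6
    have h4 := h1.neg.mul h3
    apply HasDerivAt.hasDerivWithinAt
    convert h4 using 1
    · rfl
    show -deriv g z * (z - ((b:ℝ):ℂ))⁻¹ + g z * ((z - ((b:ℝ):ℂ)) ^ 2)⁻¹ = -deriv g z * (z - ((b:ℝ):ℂ))⁻¹ + -g z * (-1 / (z - ((b:ℝ):ℂ)) ^ 2)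
    ring
    rfl
  -- combine
  have hfin := circleIntegral.integral_congr hr.le heq2
  rw [hsplit, hcau, hderiv0, smul_zero] at hfin
  rw [hFd0] at hfin
  have : (∮ z in C(((b:ℝ):ℂ), r), g z / (z - ((b:ℝ):ℂ)) ^ 2) = 0 := by linear_combination hfin
  exact this
end
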